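/- arXiv:1509.03754 — 8 statements merged into one kernel-verified Lean document; each statement's English description precedes it below -/
import Mathlib

section
/- Let Δ be a thin pure simplicial complex of rank n. For every flag F of Δ, we have T(R(T(F))) = R(F), where T is the zigzag operator and R is the flag-reversal operator. -/
open scoped Classical

variable {V : Type*}

/-- `C` is a facet (maximal face) of a pure rank-`n` complex: a face with `n` vertices. -/
def IsFacet (n : ℕ) (faces : Finset V → Prop) (C : Finset V) : Prop :=
  faces C ∧ C.card = n

/-- `faces` describes a thin pure simplicial complex of rank `n` over the vertex set `V`:
it is downward closed, every singleton is a face, every face has at most `n` vertices and is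
contained in a facet, and every ridge (face with `n - 1` vertices) lies in exactly two facets. -/
def IsThinComplex (n : ℕ) (faces : Finset V → Prop) : Prop :=
  (∀ v : V, faces {v}) ∧
  (∀ ⦃X Y : Finset V⦄, faces X → Y ⊆ X → faces Y) ∧
  (∀ ⦃X : Finset V⦄, faces X → X.card ≤ n) ∧
  (∀ ⦃X : Finset V⦄, faces X → ∃ C : Finset V, IsFacet n faces C ∧ X ⊆ C) ∧
  (∀ ⦃R : Finset V⦄, faces R → R.card = n - 1 →
    {C : Finset V | IsFacet n faces C ∧ R ⊆ C}.ncard = 2)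

/-- A flag, encoded by the ordered vertex sequence `x_0, …, x_{n-1}` determining it:
the chain of faces is `{x_0} ⊂ {x_0,x_1} ⊂ … ⊂ {x_0,…,x_{n-1}}`, the top being a facet. -/
def IsFlag (n : ℕ) (faces : Finset V → Prop) (F : List V) : Prop :=
  F.length = n ∧ F.Nodup ∧ faces F.toFinset

/-- `G = T(F)` for the zigzag operator `T = σ_{n-1} ∘ ⋯ ∘ σ_0`: if `F` is determined by the
vertex sequence `x_0, x_1, …, x_{n-1}`, then `T(F)` is determined by `x_1, …, x_{n-1}, y` with
`y ≠ x_0`. -/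
def TStep (n : ℕ) (faces : Finset V → Prop) (F G : List V) : Prop :=
  IsFlag n faces F ∧ IsFlag n faces G ∧
    ∃ y : V, G = F.tail ++ [y] ∧ F.head? ≠ some y

/-- A zigzag of length `l`: the orbit `F, T F, T² F, …` of the operator `T` on flags, recorded
as the sequence `i ↦ Tⁱ F`; it is `l`-periodic with `l` the minimal period. -/
def IsZigzag (n : ℕ) (faces : Finset V → Prop) (l : ℕ) (F : ℕ → List V) : Prop :=
  0 < l ∧ (∀ i : ℕ, TStep n faces (F i) (F (i + 1))) ∧ (∀ i : ℕ, F (i + l) = F i) ∧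
    ∀ m : ℕ, 0 < m → (∀ i : ℕ, F (i + m) = F i) → l ≤ m

/-- The set of flags of a zigzag together with those of its reverse zigzag; two zigzags are
identified (a zigzag is identified with its reverse, and with its cyclic shifts) exactly when
these sets coincide. -/
def ZigzagClass (F : ℕ → List V) : Set (List V) :=
  Set.range F ∪ Set.range fun i => (F i).reverse

/-- `G = σ_i(F)`: the flag `G` has the same `j`-faces as `F` for all `j ≠ i`, and a different
`i`-face (the `j`-face of the flag with vertex sequence `F` is `(F.take (j+1)).toFinset`). -/
def SigmaStep (n : ℕ) (faces : Finset V → Prop) (i : ℕ) (F G : List V) : Prop :=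
  IsFlag n faces F ∧ IsFlag n faces G ∧
    (∀ j : ℕ, j < n → j ≠ i → (G.take (j + 1)).toFinset = (F.take (j + 1)).toFinset) ∧
    (G.take (i + 1)).toFinset ≠ (F.take (i + 1)).toFinset

/-- `G = T_δ(F)` where `T_δ = σ_{δ(n-1)} ∘ ⋯ ∘ σ_{δ(0)}`. -/
def TDeltaStep (n : ℕ) (faces : Finset V → Prop) (δ : Equiv.Perm (Fin n))
    (F G : List V) : Prop :=
  ∃ c : ℕ → List V, c 0 = F ∧ c n = G ∧
    ∀ i : Fin n, SigmaStep n faces (δ i) (c i) (c (i + 1))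

/-- A generalized zigzag (δ-zigzag) of length `l`: the orbit of `T_δ` on flags. -/
def IsGenZigzag (n : ℕ) (faces : Finset V → Prop) (δ : Equiv.Perm (Fin n)) (l : ℕ)
    (F : ℕ → List V) : Prop :=
  0 < l ∧ (∀ i : ℕ, TDeltaStep n faces δ (F i) (F (i + 1))) ∧ (∀ i : ℕ, F (i + l) = F i) ∧
    ∀ m : ℕ, 0 < m → (∀ i : ℕ, F (i + m) = F i) → l ≤ m

/-- Adjacency in the facet-adjacency graph `Γ_{n-1}(Δ)`: two distinct facets meeting in a ridge. -/
def FacetAdj (n : ℕ) (faces : Finset V → Prop) (C D : Finset V) : Prop :=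
  IsFacet n faces C ∧ IsFacet n faces D ∧ C ≠ D ∧ (C ∩ D).card = n - 1

/-- `p 0, p 1, …, p m` is a path in the facet-adjacency graph. -/
def IsFacetPath (n : ℕ) (faces : Finset V → Prop) (m : ℕ) (p : ℕ → Finset V) : Prop :=
  ∀ i : ℕ, i < m → FacetAdj n faces (p i) (p (i + 1))

/-- The path distance in the facet-adjacency graph `Γ_{n-1}(Δ)`. -/
noncomputable def facetDist (n : ℕ) (faces : Finset V → Prop) (X Y : Finset V) : ℕ :=
  sInf {m : ℕ | ∃ p : ℕ → Finset V, p 0 = X ∧ p m = Y ∧ IsFacetPath n faces m p}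

/-- The complex is a chamber complex: the facet-adjacency graph is connected. -/
def ChamberConnected (n : ℕ) (faces : Finset V → Prop) : Prop :=
  ∀ C D : Finset V, IsFacet n faces C → IsFacet n faces D →
    ∃ (m : ℕ) (p : ℕ → Finset V), p 0 = C ∧ p m = D ∧ IsFacetPath n faces m p

/-
Write `F = x x_1 … x_{n-1}`, so that `T F = x_1 … x_{n-1} y`, `R (T F) = y x_{n-1} … x_1` and
`T (R (T F)) = x_{n-1} … x_1 z`. The ridge `{x_1, …, x_{n-1}}` lies in the facets obtained by
adding `x`, `y` or `z`, where `y ≠ x` and `y ≠ z`; by thinness it lies in only two facets, so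
`z = x` and `T (R (T F)) = x_{n-1} … x_1 x = R F`.
-/

theorem Set.eq_of_ncard_eq_two {α : Type*} {S : Set α} (hS : S.ncard = 2) {a b c : α}
    (ha : a ∈ S) (hb : b ∈ S) (hc : c ∈ S) (hab : a ≠ b) (hcb : c ≠ b) : c = a := by
  obtain ⟨u, v, -, rfl⟩ := Set.ncard_eq_two.mp hS
  simp only [Set.mem_insert_iff, Set.mem_singleton_iff] at ha hb hc
  grind

section

variable {n : ℕ} {faces : Finset V → Prop}

theorem IsThinComplex.eq_of_isFacet_insert {R : Finset V} {x y z : V}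
    (hΔ : IsThinComplex n faces) (hx : IsFacet n faces (insert x R))
    (hy : IsFacet n faces (insert y R)) (hz : IsFacet n faces (insert z R))
    (hyR : y ∉ R) (hzR : z ∉ R) (hxy : x ≠ y) (hyz : y ≠ z) : z = x := by
  obtain ⟨-, hdown, -, -, hthin⟩ := hΔ
  have hRcard : R.card = n - 1 := by
    have := hy.2
    rw [Finset.card_insert_of_notMem hyR] at this
    omega
  have hfacets := hthin (hdown hy.1 (Finset.subset_insert y R)) hRcard
  have hinsert : insert z R = insert x R :=
    Set.eq_of_ncard_eq_two hfacets (b := insert y R) ⟨hx, Finset.subset_insert x R⟩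
      ⟨hy, Finset.subset_insert y R⟩ ⟨hz, Finset.subset_insert z R⟩
      (fun h => hxy ((Finset.insert_inj hyR).mp h.symm).symm)
      (fun h => hyz ((Finset.insert_inj hyR).mp h.symm))
  exact (Finset.insert_inj hzR).mp hinsert

theorem IsFlag.isFacet {L : List V} (h : IsFlag n faces L) : IsFacet n faces L.toFinset :=
  ⟨h.2.2, by rw [List.toFinset_card_of_nodup h.2.1, h.1]⟩

theorem IsFlag.notMem_of_append_singleton {L : List V} {y : V} (h : IsFlag n faces (L ++ [y])) :
    y ∉ L.toFinset := by
  have := h.2.1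
  rw [← List.concat_eq_append, List.nodup_concat] at this
  simpa using this.1

theorem TStep.exists_eq_cons {F G : List V} (h : TStep n faces F G) :
    ∃ x L y, F = x :: L ∧ G = L ++ [y] ∧ x ≠ y := by
  obtain ⟨⟨hFlen, -⟩, ⟨hGlen, -⟩, y, rfl, hy⟩ := h
  cases F with
  | nil => simp at hFlen hGlen; omega
  | cons x L => exact ⟨x, L, y, rfl, rfl, by simpa using hy⟩

end

/-- In a thin pure simplicial complex of rank `n`, `T(R(T(F))) = R(F)` for every
flag `F`, where `R` reverses the defining vertex sequence of a flag. -/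
theorem stmt0 (n : ℕ) (faces : Finset V → Prop) (hΔ : IsThinComplex n faces)
    (F G H : List V) (hFG : TStep n faces F G) (hGH : TStep n faces G.reverse H) :
    H = F.reverse := by
  obtain ⟨x, L, y, rfl, rfl, hxy⟩ := hFG.exists_eq_cons
  obtain ⟨y', L', z, hGrev, rfl, hyz⟩ := hGH.exists_eq_cons
  obtain ⟨rfl, rfl⟩ : y = y' ∧ L.reverse = L' := by simpa using hGrev
  have hzx : z = x := by
    refine hΔ.eq_of_isFacet_insert (R := L.toFinset) (y := y) ?_ ?_ ?_
      hFG.2.1.notMem_of_append_singleton ?_ hxy hyz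
    · simpa using hFG.1.isFacet
    · simpa using hFG.2.1.isFacet
    · simpa using hGH.2.1.isFacet
    · simpa using hGH.2.1.notMem_of_append_singleton
  simp [hzx]
end

section
/- Let Δ be a finite thin pure simplicial complex of rank n, and let Z = {F_1, ..., F_l} be a zigzag of length l (so F_{i+1} = T(F_i) and T(F_l) = F_1, with l minimal). Then the sequence R(F_l), R(F_{l-1}), ..., R(F_1) is also a zigzag of length l, where R is the flag-reversal operator. -/
open scoped Classical

variable {V : Type*}

/-- Key lemma: `T ∘ R ∘ T = R`, in relational form: if `G = T F` then `F.reverse = T G.reverse`. -/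
theorem TStep_reverse {n : ℕ} {faces : Finset V → Prop} {F G : List V}
    (h : TStep n faces F G) : TStep n faces G.reverse F.reverse := by
  obtain ⟨⟨hFl, hFn, hFf⟩, ⟨hGl, hGn, hGf⟩, y, hG, hy⟩ := h
  cases F with
  | nil =>
    subst hG; simp at hFl hGl; omega
  | cons x t =>
    subst hG
    refine ⟨⟨by simpa using hGl, List.nodup_reverse.mpr hGn, by rw [List.toFinset_reverse]; exact hGf⟩,
      ⟨by simpa using hFl, List.nodup_reverse.mpr hFn, by rw [List.toFinset_reverse]; exact hFf⟩, x, ?_, ?_⟩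
    · simp
    · simp only [List.tail_cons, List.reverse_append, List.reverse_cons, List.reverse_nil,
        List.nil_append, List.singleton_append, List.head?_cons, ne_eq, Option.some.injEq]
      intro hxy
      exact hy (by simp [hxy])

/-- If `F_1, …, F_l` is a zigzag of length `l`, then
`R(F_l), R(F_{l-1}), …, R(F_1)` is also a zigzag of length `l`. -/
theorem stmt3 [Fintype V] (n : ℕ) (faces : Finset V → Prop) (hΔ : IsThinComplex n faces)
    (l : ℕ) (F : ℕ → List V) (h : IsZigzag n faces l F) :
    IsZigzag n faces l fun i => (F (l - 1 - i % l)).reverse := by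
  obtain ⟨hl, hstep, hper, hmin⟩ := h
  have hmul : ∀ t j, F (j + l * t) = F j := by
    intro t
    induction t with
    | zero => intro j; simp
    | succ s ih =>
      intro j
      rw [Nat.mul_succ, ← Nat.add_assoc, hper, ih j]
  have hFmod : ∀ k, F k = F (k % l) := by
    intro k
    have := hmul (k / l) (k % l)
    rw [Nat.mod_add_div] at this
    exact this
  refine ⟨hl, ?_, ?_, ?_⟩
  · intro i
    show TStep n faces (F (l - 1 - i % l)).reverse (F (l - 1 - (i + 1) % l)).reverse
    have hr : i % l < l := Nat.mod_lt _ hl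
    by_cases hc : i % l + 1 < l
    · have h1 : (i + 1) % l = i % l + 1 := by
        have h2 : (i + 1) % l = (i % l + 1) % l :=
          ((Nat.mod_modEq i l).add_right 1).symm
        rw [h2, Nat.mod_eq_of_lt hc]
      rw [h1]
      have key : l - 1 - (i % l + 1) + 1 = l - 1 - i % l := by omega
      have hs := hstep (l - 1 - (i % l + 1))
      rw [key] at hs
      exact TStep_reverse hs
    · have h1 : (i + 1) % l = 0 := by
        have h2 : (i + 1) % l = (i % l + 1) % l :=
          ((Nat.mod_modEq i l).add_right 1).symm
        have h3 : i % l + 1 = l := by omega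
        rw [h2, h3, Nat.mod_self]
      have h4 : l - 1 - i % l = 0 := by omega
      rw [h1, h4]
      have hs := hstep (l - 1)
      have h0 : F (l - 1 + 1) = F 0 := by
        have : l - 1 + 1 = 0 + l := by omega
        rw [this, hper]
      rw [h0] at hs
      simpa using TStep_reverse hs
  · intro i
    show (F (l - 1 - (i + l) % l)).reverse = (F (l - 1 - i % l)).reverse
    rw [Nat.add_mod_right]
  · intro m hm hGp
    apply hmin m hm
    have hm' : ∀ i, F (l - 1 - (i + m) % l) = F (l - 1 - i % l) := fun i =>
      List.reverse_injective (hGp i)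
    intro j
    set r := j % l with hrdef
    set r' := (r + m) % l with hr'def
    have hrl : r < l := Nat.mod_lt _ hl
    have hr'l : r' < l := Nat.mod_lt _ hl
    have h3 : r' ≡ r + m [MOD l] := Nat.mod_modEq _ _
    have hcong : (l - 1 - r' + m) ≡ (l - 1 - r) [MOD l] := by
      have e1 : l - 1 - r' + m + r' = l - 1 - r + (r + m) := by omega
      have step : (l - 1 - r + (r + m)) ≡ (l - 1 - r + r') [MOD l] :=
        Nat.ModEq.add_left _ h3.symm
      have e2 : (l - 1 - r' + m + r') ≡ (l - 1 - r + r') [MOD l] := by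
        rw [e1]; exact step
      exact Nat.ModEq.add_right_cancel' r' e2
    have key : (l - 1 - r' + m) % l = l - 1 - r := by
      calc (l - 1 - r' + m) % l = (l - 1 - r) % l := hcong
        _ = l - 1 - r := Nat.mod_eq_of_lt (by omega)
    have hthis := hm' (l - 1 - r')
    rw [key, Nat.mod_eq_of_lt (show l - 1 - r' < l by omega)] at hthis
    have e3 : l - 1 - (l - 1 - r) = r := by omega
    have e4 : l - 1 - (l - 1 - r') = r' := by omega
    rw [e3, e4] at hthis
    have h5 : (j + m) % l = (r + m) % l := ((Nat.mod_modEq j l).add_right m).symm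
    calc F (j + m) = F ((j + m) % l) := hFmod _
      _ = F r' := by rw [h5, ← hr'def]
      _ = F r := hthis.symm
      _ = F j := (hFmod j).symm
end

section
/- Let Δ be a finite thin pure simplicial complex of rank n. Every zigzag in Δ is uniquely determined by its k-shadow, for any k ∈ {0, 1, ..., n-1}. Specifically, if {X_i} is the k-shadow of a zigzag of length l, then for k > 0 the (k-1)-shadow is the sequence X_{l-1} ∩ X_0, X_0 ∩ X_1, X_1 ∩ X_2, ..., and for k < n-1 the (k+1)-shadow is the sequence X_0 ∪ X_1, X_1 ∪ X_2, .... -/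
open scoped Classical

variable {V : Type*}

/-!
A `T`-step drops the first vertex `a` of the vertex sequence `a :: t` and appends a new vertex
`y`, so the vertex sequence of a zigzag slides along a single sequence `x_0, x_1, …`. The
`k`-shadow is the window `{x_i, …, x_{i+k}}`: consecutive windows overlap in the smaller window
and span the larger one, and `x_i` is the only vertex leaving the window at step `i`, so the
shadow recovers every `x_i` and hence every flag.
-/

section Shift

variable {a y : V} {t : List V}

lemma take_subset_take_succ_append (k : ℕ) : t.take k ⊆ (t ++ [y]).take (k + 1) := by
  rw [List.take_append]
  exact List.Subset.trans (t.take_subset_take_left k.le_succ) (List.subset_append_left _ _)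

lemma not_mem_take_append_singleton (ha : a ∉ t) (hay : a ≠ y) (k : ℕ) :
    a ∉ (t ++ [y]).take k := fun h =>
  (List.mem_append.mp (List.take_subset _ _ h)).elim ha (by simpa [eq_comm] using hay)

variable [DecidableEq V]

lemma toFinset_take_eq_inter (ha : a ∉ t) (hay : a ≠ y) (k : ℕ) :
    (t.take k).toFinset =
      ((a :: t).take (k + 1)).toFinset ∩ ((t ++ [y]).take (k + 1)).toFinset := by
  ext z
  simp only [Finset.mem_inter, List.mem_toFinset, List.take_succ_cons, List.mem_cons]
  constructor
  · exact fun hz => ⟨Or.inr hz, take_subset_take_succ_append k hz⟩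
  · rintro ⟨rfl | hz, hz'⟩
    · exact absurd hz' (not_mem_take_append_singleton ha hay _)
    · exact hz

lemma toFinset_take_add_two_eq_union {k : ℕ} (hk : k + 1 ≤ t.length) :
    ((a :: t).take (k + 2)).toFinset =
      ((a :: t).take (k + 1)).toFinset ∪ ((t ++ [y]).take (k + 1)).toFinset := by
  rw [List.take_append_of_le_length hk]
  simp only [List.take_succ_cons, List.toFinset_cons, Finset.insert_union]
  rw [Finset.union_eq_right.mpr fun z hz => List.mem_toFinset.mpr
    (t.take_subset_take_left k.le_succ (List.mem_toFinset.mp hz))]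

lemma toFinset_take_sdiff_eq_singleton (ha : a ∉ t) (hay : a ≠ y) (k : ℕ) :
    ((a :: t).take (k + 1)).toFinset \ ((t ++ [y]).take (k + 1)).toFinset = {a} := by
  ext z
  simp only [Finset.mem_sdiff, List.mem_toFinset, List.take_succ_cons, List.mem_cons,
    Finset.mem_singleton]
  constructor
  · rintro ⟨rfl | hz, hz'⟩
    · rfl
    · exact absurd (take_subset_take_succ_append k hz) hz'
  · rintro rfl
    exact ⟨Or.inl rfl, not_mem_take_append_singleton ha hay _⟩

end Shift

namespace TStep

variable {n : ℕ} {faces : Finset V → Prop} {L M : List V}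

lemma exists_eq_cons_s4 (h : TStep n faces L M) :
    ∃ a t y, L = a :: t ∧ M = t ++ [y] ∧ a ∉ t ∧ a ≠ y ∧ t.length + 1 = n := by
  obtain ⟨⟨hL, hnd, -⟩, ⟨hM, -, -⟩, y, rfl, hy⟩ := h
  cases L with
  | nil => simp at hL hM; omega
  | cons a t =>
    exact ⟨a, t, y, rfl, rfl, (List.nodup_cons.mp hnd).1, fun hay => hy (by simp [hay]),
      by simpa using hL⟩

lemma getElem?_succ (h : TStep n faces L M) {j : ℕ} (hj : j + 1 < n) :
    L[j + 1]? = M[j]? := by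
  obtain ⟨a, t, y, rfl, rfl, -, -, ht⟩ := h.exists_eq_cons_s4
  rw [List.getElem?_append_left (by omega), List.getElem?_cons_succ]

lemma toFinset_take_eq_inter [DecidableEq V] (h : TStep n faces L M) {k : ℕ} (hk : k < n) :
    (M.take k).toFinset = (L.take (k + 1)).toFinset ∩ (M.take (k + 1)).toFinset := by
  obtain ⟨a, t, y, rfl, rfl, ha, hay, ht⟩ := h.exists_eq_cons_s4
  rw [List.take_append_of_le_length (by omega)]
  exact _root_.toFinset_take_eq_inter ha hay k

lemma toFinset_take_add_two_eq_union [DecidableEq V] (h : TStep n faces L M) {k : ℕ}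
    (hk : k + 1 < n) :
    (L.take (k + 2)).toFinset = (L.take (k + 1)).toFinset ∪ (M.take (k + 1)).toFinset := by
  obtain ⟨a, t, y, rfl, rfl, -, -, ht⟩ := h.exists_eq_cons_s4
  exact _root_.toFinset_take_add_two_eq_union (by omega)

end TStep

section Orbit

variable {n : ℕ} {faces : Finset V → Prop} {F F' : ℕ → List V}

lemma getElem?_eq_getElem?_zero_add (hF : ∀ i, TStep n faces (F i) (F (i + 1))) {j : ℕ}
    (hj : j < n) (i : ℕ) : (F i)[j]? = (F (i + j))[0]? := by
  induction j generalizing i with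
  | zero => rfl
  | succ j ih =>
    rw [(hF i).getElem?_succ hj, ih (by omega), Nat.add_right_comm, Nat.add_assoc]

lemma eq_of_getElem?_zero_eq (hF : ∀ i, TStep n faces (F i) (F (i + 1)))
    (hF' : ∀ i, TStep n faces (F' i) (F' (i + 1))) (h0 : ∀ m, (F' m)[0]? = (F m)[0]?) :
    F' = F := by
  funext i
  refine List.ext_getElem? fun j => ?_
  rcases lt_or_ge j n with hj | hj
  · rw [getElem?_eq_getElem?_zero_add hF hj, getElem?_eq_getElem?_zero_add hF' hj, h0]
  · rw [List.getElem?_eq_none ((hF' i).1.1.trans_le hj),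
      List.getElem?_eq_none ((hF i).1.1.trans_le hj)]

lemma getElem?_zero_eq_of_toFinset_take_eq [DecidableEq V]
    (hF : ∀ i, TStep n faces (F i) (F (i + 1))) (hF' : ∀ i, TStep n faces (F' i) (F' (i + 1)))
    {k : ℕ} (hk : ∀ i, ((F' i).take (k + 1)).toFinset = ((F i).take (k + 1)).toFinset)
    (m : ℕ) : (F' m)[0]? = (F m)[0]? := by
  obtain ⟨a, t, y, hL, hM, ha, hay, -⟩ := (hF m).exists_eq_cons_s4
  obtain ⟨a', t', y', hL', hM', ha', hay', -⟩ := (hF' m).exists_eq_cons_s4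
  have hsdiff := toFinset_take_sdiff_eq_singleton ha' hay' k
  rw [← hL', ← hM', hk, hk, hL, hM, toFinset_take_sdiff_eq_singleton ha hay,
    Finset.singleton_inj] at hsdiff
  simp [hL, hL', hsdiff]

theorem eq_of_toFinset_take_eq [DecidableEq V]
    (hF : ∀ i, TStep n faces (F i) (F (i + 1))) (hF' : ∀ i, TStep n faces (F' i) (F' (i + 1)))
    {k : ℕ} (hk : ∀ i, ((F' i).take (k + 1)).toFinset = ((F i).take (k + 1)).toFinset) :
    F' = F :=
  eq_of_getElem?_zero_eq hF hF' (getElem?_zero_eq_of_toFinset_take_eq hF hF' hk)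

end Orbit

theorem stmt4_general (n : ℕ) (faces : Finset V → Prop)
    (l : ℕ) (F : ℕ → List V) (h : IsZigzag n faces l F) (k : ℕ) (hk : k < n) :
    (0 < k → ∀ i : ℕ, ((F (i + 1)).take k).toFinset =
        ((F i).take (k + 1)).toFinset ∩ ((F (i + 1)).take (k + 1)).toFinset) ∧
    (k + 1 < n → ∀ i : ℕ, ((F i).take (k + 2)).toFinset =
        ((F i).take (k + 1)).toFinset ∪ ((F (i + 1)).take (k + 1)).toFinset) ∧
    (∀ F' : ℕ → List V, IsZigzag n faces l F' →
      (∀ i : ℕ, ((F' i).take (k + 1)).toFinset = ((F i).take (k + 1)).toFinset) →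
      ∀ i : ℕ, F' i = F i) :=
  ⟨fun _ i => (h.2.1 i).toFinset_take_eq_inter hk,
    fun hk' i => (h.2.1 i).toFinset_take_add_two_eq_union hk',
    fun _ h' hsh => congrFun (eq_of_toFinset_take_eq h.2.1 h'.2.1 hsh)⟩

/-- A zigzag is uniquely determined by any of its `k`-shadows; moreover if `{X_i}`
is the `k`-shadow then (for `k > 0`) the `(k-1)`-face of `F_{i+1}` is `X_i ∩ X_{i+1}` and (for
`k < n - 1`) the `(k+1)`-face of `F_i` is `X_i ∪ X_{i+1}`. -/
theorem stmt4 [Fintype V] (n : ℕ) (faces : Finset V → Prop) (hΔ : IsThinComplex n faces)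
    (l : ℕ) (F : ℕ → List V) (h : IsZigzag n faces l F) (k : ℕ) (hk : k < n) :
    (0 < k → ∀ i : ℕ, ((F (i + 1)).take k).toFinset =
        ((F i).take (k + 1)).toFinset ∩ ((F (i + 1)).take (k + 1)).toFinset) ∧
    (k + 1 < n → ∀ i : ℕ, ((F i).take (k + 2)).toFinset =
        ((F i).take (k + 1)).toFinset ∪ ((F (i + 1)).take (k + 1)).toFinset) ∧
    (∀ F' : ℕ → List V, IsZigzag n faces l F' →
      (∀ i : ℕ, ((F' i).take (k + 1)).toFinset = ((F i).take (k + 1)).toFinset) →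
      ∀ i : ℕ, F' i = F i) :=
  stmt4_general n faces l F h k hk
end

section
/- Every zigzag in the n-simplex α_n has length n+1, and the number of zigzags (identifying each zigzag with its reverse) is n!/2 for n ≥ 2. -/
open scoped Classical

variable {V : Type*}

/-! In the simplex every proper subset of the vertices is a face, so a flag is just a
repetition-free sequence `x_0, …, x_{n-1}`, and `T` drops `x_0` and appends the unique vertex
missing from the sequence. Hence a zigzag is the sequence of length-`n` windows of a cyclic
enumeration `L` of all `n + 1` vertices, and its minimal period is `n + 1`. Its flags together
with their reverses are the `n`-prefixes of the rotations of `L` and of `L.reverse`; a prefix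
determines the enumeration, so the class of a zigzag determines the dihedral orbit of `L`, which
has exactly `2 (n + 1)` elements when `n ≥ 2`. The `(n + 1)!` enumerations thus fall into
`(n + 1)! / (2 (n + 1)) = n! / 2` classes. -/

namespace List

variable {α : Type*}

theorem eq_of_perm_of_take_eq {n : ℕ} {X Y : List α} (hXY : X ~ Y) (hX : X.length = n + 1)
    (htake : X.take n = Y.take n) : X = Y := by
  have hY : Y.length = n + 1 := hXY.length_eq ▸ hX
  obtain ⟨a, ha⟩ := length_eq_one_iff.mp (show (X.drop n).length = 1 by simp [hX])
  obtain ⟨b, hb⟩ := length_eq_one_iff.mp (show (Y.drop n).length = 1 by simp [hY])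
  have hX' : X = X.take n ++ [a] := by rw [← ha, take_append_drop]
  have hY' : Y = X.take n ++ [b] := by rw [htake, ← hb, take_append_drop]
  rw [hX', hY', perm_append_left_iff, singleton_perm_singleton] at hXY
  rw [hX', hY', hXY]

theorem take_rotate_one_reverse {n : ℕ} {M : List α} (hM : M.length = n + 1) :
    (M.reverse.rotate 1).take n = (M.take n).reverse := by
  obtain ⟨z, hz⟩ := length_eq_one_iff.mp (show (M.drop n).length = 1 by simp [hM])
  have hp : (M.take n).length = n := by simp [hM]
  conv_lhs => rw [← take_append_drop n M, hz]
  simp [hp]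

theorem Nodup.not_isRotated_reverse {L : List α} (hL : L.Nodup) (h3 : 3 ≤ L.length) :
    ¬ L ~r L.reverse := by
  rintro ⟨k, h⟩
  have hb0 : 0 < (L.rotate k).length := by simp; omega
  have hb1 : 1 < (L.rotate k).length := by simp; omega
  have e0 := hL.getElem_inj_iff.mp (by simpa using getElem_of_eq h hb0)
  have e1 := hL.getElem_inj_iff.mp (by simpa using getElem_of_eq h hb1)
  rw [Nat.add_mod, e0, Nat.mod_eq_of_lt (by omega : 1 < L.length),
    show 1 + (L.length - 1) = L.length by omega, Nat.mod_self] at e1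
  omega

theorem Nodup.perm_of_length_eq_card [Fintype α] {L : List α} (hL : L.Nodup)
    (hlen : L.length = Fintype.card α) : L ~ (Finset.univ : Finset α).toList :=
  (subperm_of_subset hL fun x _ => by simp).perm_of_length_le (by simp [hlen])

theorem notMem_of_nodup_tail_append {F : List α} {y : α} (hnd : (F.tail ++ [y]).Nodup)
    (hy : F.head? ≠ some y) : y ∉ F := by
  cases F with
  | nil => simp
  | cons a t =>
    simp only [tail_cons, nodup_append, nodup_singleton, mem_singleton] at hnd
    simp only [head?_cons, ne_eq, Option.some.injEq] at hy
    simpa [Ne.symm hy] using fun hyt => hnd.2.2 y hyt y rfl rfl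

noncomputable def dihedralOrbit (L : List α) : Finset (List α) :=
  (L.cyclicPermutations ++ L.reverse.cyclicPermutations).toFinset

theorem mem_dihedralOrbit {L M : List α} :
    M ∈ L.dihedralOrbit ↔ L ~r M ∨ L.reverse ~r M := by
  simp [dihedralOrbit, mem_cyclicPermutations_iff, isRotated_comm]

theorem perm_of_mem_dihedralOrbit {L M : List α} (h : M ∈ L.dihedralOrbit) : M ~ L := by
  rcases mem_dihedralOrbit.mp h with h | h
  · exact h.perm.symm
  · exact h.perm.symm.trans (reverse_perm L)

theorem dihedralOrbit_eq_of_mem {L M : List α} (h : M ∈ L.dihedralOrbit) :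
    M.dihedralOrbit = L.dihedralOrbit := by
  ext N
  simp only [mem_dihedralOrbit]
  rcases mem_dihedralOrbit.mp h with h | h
  · have h' : L.reverse ~r M.reverse := h.reverse
    exact ⟨Or.imp h.trans h'.trans, Or.imp h.symm.trans h'.symm.trans⟩
  · have h' : L ~r M.reverse := by simpa using h.reverse
    exact ⟨Or.symm ∘ Or.imp h.trans h'.trans, Or.symm ∘ Or.imp h'.symm.trans h.symm.trans⟩

theorem card_dihedralOrbit {L : List α} (hL : L.Nodup) (h3 : 3 ≤ L.length) :
    L.dihedralOrbit.card = 2 * L.length := by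
  have hne : L ≠ [] := ne_nil_of_length_pos (by omega)
  rw [dihedralOrbit, toFinset_card_of_nodup, length_append,
    length_cyclicPermutations_of_ne_nil _ hne,
    length_cyclicPermutations_of_ne_nil _ (reverse_ne_nil_iff.mpr hne), length_reverse]
  · ring
  refine nodup_append.mpr ⟨hL.cyclicPermutations, (nodup_reverse.mpr hL).cyclicPermutations, ?_⟩
  intro M hM M' hM' hMM'
  subst hMM'
  rw [mem_cyclicPermutations_iff] at hM hM'
  exact hL.not_isRotated_reverse h3 (hM.symm.trans hM')

end List

theorem IsZigzag.length_unique {n l l' : ℕ} {faces : Finset V → Prop} {F : ℕ → List V}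
    (h : IsZigzag n faces l F) (h' : IsZigzag n faces l' F) : l = l' :=
  le_antisymm (h.2.2.2 l' h'.1 h'.2.2.1) (h'.2.2.2 l h.1 h.2.2.1)

namespace SimplexZigzag

variable {α : Type*} {n : ℕ}

def cyclicZigzag (n : ℕ) (L : List α) (i : ℕ) : List α := (L.rotate i).take n

theorem cyclicZigzag_add_length (L : List α) (i : ℕ) :
    cyclicZigzag n L (i + L.length) = cyclicZigzag n L i := by
  rw [cyclicZigzag, cyclicZigzag, ← List.rotate_mod, Nat.add_mod_right, List.rotate_mod]

open List in
theorem range_cyclicZigzag (L : List α) :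
    Set.range (cyclicZigzag n L) = take n '' {M | L ~r M} := by
  ext N
  simp only [Set.mem_range, Set.mem_image, Set.mem_ofPred_eq, IsRotated]
  constructor
  · rintro ⟨i, rfl⟩
    exact ⟨L.rotate i, ⟨i, rfl⟩, rfl⟩
  · rintro ⟨_, ⟨i, rfl⟩, rfl⟩
    exact ⟨i, rfl⟩

open List in
theorem range_reverse_cyclicZigzag {L : List α} (hlen : L.length = n + 1) :
    Set.range (fun i => (cyclicZigzag n L i).reverse) = take n '' {M | L.reverse ~r M} := by
  ext N
  simp only [Set.mem_range, Set.mem_image, Set.mem_ofPred_eq]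
  constructor
  · rintro ⟨i, rfl⟩
    exact ⟨(L.rotate i).reverse.rotate 1, (IsRotated.reverse ⟨i, rfl⟩).trans ⟨1, rfl⟩,
      take_rotate_one_reverse (by simp [hlen])⟩
  · rintro ⟨N, hN, rfl⟩
    obtain ⟨i, hi⟩ : L ~r (N.rotate n).reverse := by
      rw [← isRotated_reverse_iff, reverse_reverse]
      exact hN.trans ⟨n, rfl⟩
    have hNlen : N.length = n + 1 := by rw [← hN.perm.length_eq, length_reverse, hlen]
    refine ⟨i, ?_⟩
    rw [cyclicZigzag, hi, ← take_rotate_one_reverse (by simp [hNlen]), reverse_reverse,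
      rotate_rotate, ← hNlen, rotate_length]

theorem zigzagClass_cyclicZigzag {L : List α} (hlen : L.length = n + 1) :
    ZigzagClass (cyclicZigzag n L) = List.take n '' L.dihedralOrbit := by
  rw [ZigzagClass, range_cyclicZigzag, range_reverse_cyclicZigzag hlen, ← Set.image_union]
  congr 1
  ext M
  simp [List.mem_dihedralOrbit]

theorem zigzagClass_cyclicZigzag_eq_iff {L M : List α} (hlen : L.length = n + 1)
    (hML : M.Perm L) :
    ZigzagClass (cyclicZigzag n M) = ZigzagClass (cyclicZigzag n L) ↔ M ∈ L.dihedralOrbit := by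
  rw [zigzagClass_cyclicZigzag hlen, zigzagClass_cyclicZigzag (hML.length_eq ▸ hlen)]
  refine ⟨fun h => ?_, fun h => by rw [List.dihedralOrbit_eq_of_mem h]⟩
  obtain ⟨N, hN, hNM⟩ : M.take n ∈ List.take n '' L.dihedralOrbit :=
    h ▸ ⟨M, List.mem_dihedralOrbit.mpr (Or.inl (List.IsRotated.refl M)), rfl⟩
  have hNL := List.perm_of_mem_dihedralOrbit hN
  rwa [← List.eq_of_perm_of_take_eq (hNL.trans hML.symm) (hNL.length_eq ▸ hlen) hNM]

section Simplex

variable [Fintype α]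

def simplex (α : Type*) [Fintype α] (X : Finset α) : Prop := X ≠ Finset.univ

theorem isFlag_simplex_iff (hα : Fintype.card α = n + 1) {F : List α} :
    IsFlag n (simplex α) F ↔ F.length = n ∧ F.Nodup := by
  refine ⟨fun h => ⟨h.1, h.2.1⟩, fun ⟨hlen, hnd⟩ => ⟨hlen, hnd, fun huniv => ?_⟩⟩
  have := congrArg Finset.card huniv
  rw [List.toFinset_card_of_nodup hnd, Finset.card_univ] at this
  omega

theorem exists_notMem_of_isFlag {F : List α} (hF : IsFlag n (simplex α) F) : ∃ a, a ∉ F := by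
  by_contra! hall
  exact hF.2.2 (Finset.eq_univ_of_forall fun a => List.mem_toFinset.mpr (hall a))

theorem eq_of_notMem (hα : Fintype.card α = n + 1) {F : List α} (hlen : F.length = n)
    (hnd : F.Nodup) {a b : α} (ha : a ∉ F) (hb : b ∉ F) : b = a := by
  have hfull : (F ++ [a]).Perm (Finset.univ : Finset α).toList := by
    simpa using (hnd.concat ha).perm_of_length_eq_card (by simp [hlen, hα])
  simpa [hb] using hfull.mem_iff.mpr (Finset.mem_toList.mpr (Finset.mem_univ b))

theorem TStep.unique (hα : Fintype.card α = n + 1) {F G G' : List α}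
    (h : TStep n (simplex α) F G) (h' : TStep n (simplex α) F G') : G = G' := by
  obtain ⟨hF, hG, y, rfl, hy⟩ := h
  obtain ⟨-, hG', y', rfl, hy'⟩ := h'
  rw [eq_of_notMem hα hF.1 hF.2.1 (List.notMem_of_nodup_tail_append hG'.2.1 hy')
    (List.notMem_of_nodup_tail_append hG.2.1 hy)]

theorem isFlag_cyclicZigzag (hα : Fintype.card α = n + 1) {L : List α} (hL : L.Nodup)
    (hlen : L.length = n + 1) (i : ℕ) : IsFlag n (simplex α) (cyclicZigzag n L i) :=
  (isFlag_simplex_iff hα).mpr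
    ⟨by simp [cyclicZigzag, hlen], (List.nodup_rotate.mpr hL).sublist (List.take_sublist _ _)⟩

theorem tStep_cyclicZigzag (hα : Fintype.card α = n + 1) (hn : n ≠ 0) {L : List α}
    (hL : L.Nodup) (hlen : L.length = n + 1) (i : ℕ) :
    TStep n (simplex α) (cyclicZigzag n L i) (cyclicZigzag n L (i + 1)) := by
  refine ⟨isFlag_cyclicZigzag hα hL hlen i, isFlag_cyclicZigzag hα hL hlen (i + 1), ?_⟩
  obtain ⟨m, rfl⟩ := Nat.exists_eq_succ_of_ne_zero hn
  have hM : (L.rotate i).length = m + 2 := by simp [hlen]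
  have hnd : (L.rotate i).Nodup := List.nodup_rotate.mpr hL
  obtain ⟨a, t, hat⟩ :=
    List.exists_cons_of_ne_nil (List.ne_nil_of_length_pos (by omega : 0 < (L.rotate i).length))
  obtain ⟨s, y, rfl⟩ := (List.eq_nil_or_concat t).resolve_left (by rintro rfl; simp [hat] at hM)
  have hs : s.length = m := by simpa [hat] using hM
  refine ⟨y, ?_, ?_⟩
  · simp [cyclicZigzag, ← List.rotate_rotate, hat, hs, List.take_append]
  · have hay : a ∉ s.concat y := (List.nodup_cons.mp (hat ▸ hnd)).1
    simpa [cyclicZigzag, hat, hs] using fun hay' => hay (by simp [hay'])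

theorem isZigzag_cyclicZigzag (hα : Fintype.card α = n + 1) (hn : n ≠ 0) {L : List α}
    (hL : L.Nodup) (hlen : L.length = n + 1) :
    IsZigzag n (simplex α) (n + 1) (cyclicZigzag n L) := by
  refine ⟨n.succ_pos, tStep_cyclicZigzag hα hn hL hlen,
    fun i => hlen ▸ cyclicZigzag_add_length L i, fun m hm hper => ?_⟩
  have hrot : L.rotate m = L := by
    refine List.eq_of_perm_of_take_eq (n := n) (L.rotate_perm m) (by simp [hlen]) ?_
    simpa [cyclicZigzag] using hper 0
  have hdvd : n + 1 ∣ m := by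
    simpa [hlen, Nat.dvd_iff_mod_eq_zero, List.ne_nil_of_length_pos] using
      hL.rotate_eq_self_iff.mp hrot
  exact Nat.le_of_dvd hm hdvd

theorem eq_cyclicZigzag_of_isZigzag (hα : Fintype.card α = n + 1) (hn : n ≠ 0) {l : ℕ}
    {F : ℕ → List α} (hF : IsZigzag n (simplex α) l F) :
    ∃ L : List α, L.Nodup ∧ L.length = n + 1 ∧ F = cyclicZigzag n L := by
  have hF0 : IsFlag n (simplex α) (F 0) := (hF.2.1 0).1
  obtain ⟨a, ha⟩ := exists_notMem_of_isFlag hF0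
  have hL : (F 0 ++ [a]).Nodup := by simpa using hF0.2.1.concat ha
  have hlen : (F 0 ++ [a]).length = n + 1 := by simp [hF0.1]
  refine ⟨F 0 ++ [a], hL, hlen, funext fun i => ?_⟩
  induction i with
  | zero => simp [cyclicZigzag, hF0.1]
  | succ i ih =>
    exact TStep.unique hα (ih ▸ hF.2.1 i) (tStep_cyclicZigzag hα hn hL hlen i)

theorem IsZigzag.length_eq (hα : Fintype.card α = n + 1) (hn : n ≠ 0) {l : ℕ}
    {F : ℕ → List α} (hF : IsZigzag n (simplex α) l F) : l = n + 1 := by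
  obtain ⟨L, hL, hlen, rfl⟩ := eq_cyclicZigzag_of_isZigzag hα hn hF
  exact hF.length_unique (isZigzag_cyclicZigzag hα hn hL hlen)

noncomputable def enumerations (α : Type*) [Fintype α] : Finset (List α) :=
  (Finset.univ : Finset α).toList.permutations.toFinset

theorem mem_enumerations {L : List α} :
    L ∈ enumerations α ↔ L.Nodup ∧ L.length = Fintype.card α := by
  rw [enumerations, List.mem_toFinset, List.mem_permutations]
  exact ⟨fun h => ⟨h.nodup_iff.mpr (Finset.nodup_toList _), by simp [h.length_eq]⟩,
    fun ⟨hL, hlen⟩ => hL.perm_of_length_eq_card hlen⟩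

theorem card_enumerations : (enumerations α).card = (Fintype.card α).factorial := by
  rw [enumerations, List.toFinset_card_of_nodup (List.nodup_permutations _ (Finset.nodup_toList _)),
    List.length_permutations, Finset.length_toList, Finset.card_univ]

theorem filter_zigzagClass_eq_dihedralOrbit (hα : Fintype.card α = n + 1) {L : List α}
    (hL : L ∈ enumerations α) :
    (enumerations α).filter (fun M => ZigzagClass (cyclicZigzag n M) =
      ZigzagClass (cyclicZigzag n L)) = L.dihedralOrbit := by
  obtain ⟨hnd, hlen⟩ := mem_enumerations.mp hL
  ext M
  rw [Finset.mem_filter, mem_enumerations]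
  constructor
  · rintro ⟨⟨hM, hMlen⟩, hclass⟩
    have hML : M.Perm L :=
      (hM.perm_of_length_eq_card hMlen).trans (hnd.perm_of_length_eq_card hlen).symm
    exact (zigzagClass_cyclicZigzag_eq_iff (hlen.trans hα) hML).mp hclass
  · intro hM
    have hML := List.perm_of_mem_dihedralOrbit hM
    exact ⟨⟨hML.nodup_iff.mpr hnd, hML.length_eq.trans hlen⟩,
      (zigzagClass_cyclicZigzag_eq_iff (hlen.trans hα) hML).mpr hM⟩

theorem card_image_zigzagClass_enumerations (hα : Fintype.card α = n + 1) (hn : 2 ≤ n) :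
    ((enumerations α).image fun L => ZigzagClass (cyclicZigzag n L)).card = n.factorial / 2 := by
  set classes := (enumerations α).image fun L => ZigzagClass (cyclicZigzag n L)
  have hfiber : ∀ S ∈ classes, ((enumerations α).filter
      fun M => ZigzagClass (cyclicZigzag n M) = S).card = 2 * (n + 1) := by
    rintro _ hS
    obtain ⟨L, hL, rfl⟩ := Finset.mem_image.mp hS
    obtain ⟨hnd, hlen⟩ := mem_enumerations.mp hL
    rw [filter_zigzagClass_eq_dihedralOrbit hα hL, List.card_dihedralOrbit hnd (by omega), hlen,
      hα]
  have hcount := Finset.card_eq_sum_card_image (fun L => ZigzagClass (cyclicZigzag n L))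
    (enumerations α)
  rw [Finset.sum_const_nat hfiber, card_enumerations, hα, Nat.factorial_succ] at hcount
  have hfact : n.factorial = classes.card * 2 :=
    Nat.eq_of_mul_eq_mul_left (by omega : 0 < n + 1) (by rw [hcount]; ring)
  rw [hfact, Nat.mul_div_cancel _ two_pos]

theorem setOf_zigzagClass_eq_image (hα : Fintype.card α = n + 1) (hn : n ≠ 0) :
    {S : Set (List α) | ∃ (l : ℕ) (F : ℕ → List α),
        IsZigzag n (simplex α) l F ∧ S = ZigzagClass F} =
      ↑((enumerations α).image fun L => ZigzagClass (cyclicZigzag n L)) := by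
  ext S
  simp only [Set.mem_ofPred_eq, Finset.coe_image, Set.mem_image, Finset.mem_coe,
    mem_enumerations, hα]
  constructor
  · rintro ⟨l, F, hF, rfl⟩
    obtain ⟨L, hL, hlen, rfl⟩ := eq_cyclicZigzag_of_isZigzag hα hn hF
    exact ⟨L, ⟨hL, hlen⟩, rfl⟩
  · rintro ⟨L, ⟨hL, hlen⟩, rfl⟩
    exact ⟨n + 1, _, isZigzag_cyclicZigzag hα hn hL hlen, rfl⟩

end Simplex

end SimplexZigzag

/-- Every zigzag in the `n`-simplex `α_n` (vertices `Fin (n+1)`, faces the proper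
subsets) has length `n + 1`, and for `n ≥ 2` the number of zigzags, identifying each zigzag
with its reverse, is `n!/2`. -/
theorem stmt8 (n : ℕ) (hn : 2 ≤ n) :
    (∀ (l : ℕ) (F : ℕ → List (Fin (n + 1))),
      IsZigzag n (fun X : Finset (Fin (n + 1)) => X ≠ Finset.univ) l F → l = n + 1) ∧
    {S : Set (List (Fin (n + 1))) | ∃ (l : ℕ) (F : ℕ → List (Fin (n + 1))),
        IsZigzag n (fun X : Finset (Fin (n + 1)) => X ≠ Finset.univ) l F ∧
        S = ZigzagClass F}.ncard = n.factorial / 2 := by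
  have hα : Fintype.card (Fin (n + 1)) = n + 1 := Fintype.card_fin _
  refine ⟨fun l F hF => SimplexZigzag.IsZigzag.length_eq hα (by omega) hF, ?_⟩
  rw [show (fun X : Finset (Fin (n + 1)) => X ≠ Finset.univ) = SimplexZigzag.simplex _ from rfl,
    SimplexZigzag.setOf_zigzagClass_eq_image hα (by omega), Set.ncard_coe_finset]
  exact SimplexZigzag.card_image_zigzagClass_enumerations hα hn
end

section
/- A thin chamber complex Δ of rank n contains a zigzag of length n+1 if and only if Δ is the n-simplex α_n (i.e., its vertex set has n+1 elements and every n-element subset of vertices is a facet). -/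
/-!
The flags of a zigzag of length `n + 1` are the length-`n` windows of its 0-shadow `x`, an
`(n+1)`-periodic sequence with `x i ≠ x (i + n)`. Two consecutive windows together with this
inequality show that `x 0, …, x n` are distinct, and deleting any `x i` leaves a window, so every
`n`-subset of `S = {x 0, …, x n}` is a facet. By thinness the two facets through a ridge inside `S`
are both inside `S`, so chamber connectivity pushes every facet, hence every vertex, into `S`.
Conversely, running cyclically through the `n + 1` vertices of the simplex gives such a shadow.
-/

open scoped Classical

variable {V : Type*}

def window (x : ℕ → V) (n i : ℕ) : List V :=
  (List.range n).map fun j => x (i + j)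

section Window

variable (x : ℕ → V)

@[simp]
lemma length_window (n i : ℕ) : (window x n i).length = n := by
  simp [window]

lemma head?_window {n : ℕ} (hn : 0 < n) (i : ℕ) : (window x n i).head? = some (x i) := by
  obtain ⟨m, rfl⟩ := Nat.exists_eq_add_one_of_ne_zero hn.ne'
  simp [window, List.range_succ_eq_map]

lemma window_succ_left (n i : ℕ) : window x (n + 1) i = x i :: window x n (i + 1) := by
  simp only [window, List.range_succ_eq_map, List.map_cons, List.map_map, Nat.add_zero]
  congr 2
  funext j
  simp only [Function.comp, Nat.succ_eq_add_one]
  congr 1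
  omega

lemma window_succ_right (n i : ℕ) : window x (n + 1) i = window x n i ++ [x (i + n)] := by
  simp [window, List.range_succ]

lemma toFinset_window_succ_of_periodic {n : ℕ} (hper : ∀ i, x (i + (n + 1)) = x i) (i : ℕ) :
    (window x (n + 1) (i + 1)).toFinset = (window x (n + 1) i).toFinset := by
  rw [window_succ_right, window_succ_left, show i + 1 + n = i + (n + 1) by omega, hper]
  ext v
  simp

lemma nodup_window_succ {n i : ℕ} (hn : 0 < n) (h₀ : (window x n i).Nodup)
    (h₁ : (window x n (i + 1)).Nodup) (hne : x i ≠ x (i + n)) :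
    (window x (n + 1) i).Nodup := by
  obtain ⟨m, rfl⟩ := Nat.exists_eq_add_one_of_ne_zero hn.ne'
  rw [window_succ_left] at h₀ ⊢
  refine List.nodup_cons.2 ⟨?_, h₁⟩
  rw [window_succ_right, List.mem_append, List.mem_singleton, show i + 1 + m = i + (m + 1) by omega]
  exact fun h => h.elim (List.nodup_cons.1 h₀).1 hne

end Window

lemma getElem?_succ_of_eq_tail_append {F G : List V} {y : V} (hG : G = F.tail ++ [y]) {j : ℕ}
    (hj : j + 1 < F.length) : G[j]? = F[j + 1]? := by
  rw [hG, List.getElem?_append_left (by rw [List.length_tail]; omega), List.getElem?_tail]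

lemma exists_eq_window {n : ℕ} (hn : 0 < n) {F : ℕ → List V} (hlen : ∀ i, (F i).length = n)
    (hstep : ∀ i, ∃ y, F (i + 1) = (F i).tail ++ [y]) : ∃ x : ℕ → V, F = window x n := by
  have hne : ∀ i, F i ≠ [] := fun i => List.ne_nil_of_length_pos ((hlen i).symm ▸ hn)
  choose y hy using hstep
  refine ⟨fun i => (F i).head (hne i), funext fun i => List.ext_getElem? fun j => ?_⟩
  rcases lt_or_ge j n with hj | hj
  · simp only [window, List.getElem?_map, List.getElem?_range hj, Option.map_some]
    induction j generalizing i with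
    | zero => rw [← List.head?_eq_getElem?, List.head?_eq_some_head (hne i), Nat.add_zero]
    | succ j ih =>
      rw [← getElem?_succ_of_eq_tail_append (hy i) (by rw [hlen]; exact hj),
        ih (i + 1) (by omega), Nat.add_right_comm, Nat.add_assoc]
  · rw [List.getElem?_eq_none (by rw [hlen]; exact hj),
      List.getElem?_eq_none (by rw [length_window]; exact hj)]

lemma tStep_window_iff {faces : Finset V → Prop} {n : ℕ} (hn : 0 < n) (x : ℕ → V) (i : ℕ) :
    TStep n faces (window x n i) (window x n (i + 1)) ↔
      IsFlag n faces (window x n i) ∧ IsFlag n faces (window x n (i + 1)) ∧ x i ≠ x (i + n) := by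
  obtain ⟨m, rfl⟩ := Nat.exists_eq_add_one_of_ne_zero hn.ne'
  have htail : (window x (m + 1) i).tail = window x m (i + 1) := by
    rw [window_succ_left, List.tail_cons]
  have hnext : window x (m + 1) (i + 1) = window x m (i + 1) ++ [x (i + (m + 1))] := by
    rw [window_succ_right, Nat.add_right_comm, Nat.add_assoc]
  simp only [TStep, and_congr_right_iff]
  intro _ _
  simp [head?_window x hn, htail, hnext]

lemma window_periodic_iff {n : ℕ} (hn : 0 < n) (x : ℕ → V) (p : ℕ) :
    (∀ i, window x n (i + p) = window x n i) ↔ ∀ i, x (i + p) = x i := by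
  refine ⟨fun h i => by simpa [head?_window x hn] using congrArg List.head? (h i), fun h i => ?_⟩
  simp only [window, Nat.add_right_comm i p, h]

lemma TStep.pos {faces : Finset V → Prop} {n : ℕ} {F G : List V} (h : TStep n faces F G) :
    0 < n := by
  obtain ⟨-, ⟨hG, -⟩, _, rfl, -⟩ := h
  rw [List.length_append, List.length_singleton] at hG
  omega

namespace IsThinComplex

variable {n : ℕ} {faces : Finset V → Prop}

lemma pos [Nonempty V] (hΔ : IsThinComplex n faces) : 0 < n := by
  obtain ⟨v⟩ := ‹Nonempty V›
  simpa [Nat.one_le_iff_ne_zero, Nat.pos_iff_ne_zero] using hΔ.2.2.1 (hΔ.1 v)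

lemma eq_or_eq_of_ridge (hΔ : IsThinComplex n faces) {R A B D : Finset V} (hR : faces R)
    (hRc : R.card = n - 1) (hA : IsFacet n faces A) (hB : IsFacet n faces B) (hRA : R ⊆ A)
    (hRB : R ⊆ B) (hAB : A ≠ B) (hD : IsFacet n faces D) (hRD : R ⊆ D) : D = A ∨ D = B := by
  have htwo := hΔ.2.2.2.2 hR hRc
  have hsub : ({A, B} : Set (Finset V)) ⊆ {C | IsFacet n faces C ∧ R ⊆ C} :=
    Set.pair_subset ⟨hA, hRA⟩ ⟨hB, hRB⟩
  have hpair := Set.eq_of_subset_of_ncard_le hsub (by rw [htwo, Set.ncard_pair hAB])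
    (Set.finite_of_ncard_pos (by omega))
  simpa using hpair.symm.subset ⟨hD, hRD⟩

lemma subset_of_facetAdj (hΔ : IsThinComplex n faces) (hn : 0 < n) {S C D : Finset V}
    (hS : S.card = n + 1) (hSf : ∀ X ⊆ S, X.card = n → faces X) (hCS : C ⊆ S)
    (hCD : FacetAdj n faces C D) : D ⊆ S := by
  obtain ⟨hC, hD, -, hRc⟩ := hCD
  set R := C ∩ D
  have hRS : R ⊆ S := Finset.inter_subset_left.trans hCS
  obtain ⟨a, b, hab, hSR⟩ : ∃ a b, a ≠ b ∧ S \ R = {a, b} := by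
    rw [← Finset.card_eq_two, Finset.card_sdiff_of_subset hRS, hS, hRc]
    omega
  have hmem : ∀ c ∈ S \ R, c ∈ S ∧ c ∉ R := fun c hc => Finset.mem_sdiff.1 hc
  have hfacet : ∀ c ∈ S \ R, IsFacet n faces (insert c R) ∧ insert c R ⊆ S := fun c hc =>
    have hcS := hmem c hc
    have hsub := Finset.insert_subset hcS.1 hRS
    ⟨⟨hSf _ hsub (by rw [Finset.card_insert_of_notMem hcS.2, hRc]; omega), by
      rw [Finset.card_insert_of_notMem hcS.2, hRc]; omega⟩, hsub⟩
  have ha : a ∈ S \ R := by simp [hSR]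
  have hb : b ∈ S \ R := by simp [hSR]
  have hne : insert a R ≠ insert b R := fun h => by
    have : a ∈ insert b R := h ▸ Finset.mem_insert_self a R
    simp only [Finset.mem_insert] at this
    exact this.elim hab (hmem a ha).2
  rcases hΔ.eq_or_eq_of_ridge (hΔ.2.1 hC.1 Finset.inter_subset_left) hRc (hfacet a ha).1
    (hfacet b hb).1 (Finset.subset_insert a R) (Finset.subset_insert b R) hne hD
    Finset.inter_subset_right with h | h
  exacts [h ▸ (hfacet a ha).2, h ▸ (hfacet b hb).2]

end IsThinComplex

lemma IsFacetPath.last_of_closed {n m : ℕ} {faces : Finset V → Prop} {p : ℕ → Finset V}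
    (hp : IsFacetPath n faces m p) (P : Finset V → Prop)
    (hP : ∀ C D, P C → FacetAdj n faces C D → P D) (h₀ : P (p 0)) : P (p m) := by
  induction m with
  | zero => exact h₀
  | succ k ih => exact hP _ _ (ih (fun i hi => hp i (by omega))) (hp k (by omega))

lemma ChamberConnected.eq_univ [Fintype V] {n : ℕ} {faces : Finset V → Prop}
    (hconn : ChamberConnected n faces) (hΔ : IsThinComplex n faces) (hn : 0 < n) {S : Finset V}
    (hS : S.card = n + 1) (hSf : ∀ X ⊆ S, X.card = n → faces X) : S = Finset.univ := by
  refine Finset.eq_univ_iff_forall.2 fun v => ?_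
  obtain ⟨D, hD, hvD⟩ := hΔ.2.2.2.1 (hΔ.1 v)
  obtain ⟨s, hs⟩ : S.Nonempty := Finset.card_pos.1 (by omega)
  have hCS : S.erase s ⊆ S := Finset.erase_subset s S
  have hCc : (S.erase s).card = n := by rw [Finset.card_erase_of_mem hs, hS]; rfl
  obtain ⟨m, p, hp₀, rfl, hp⟩ := hconn _ D ⟨hSf _ hCS hCc, hCc⟩ hD
  exact hp.last_of_closed (· ⊆ S) (fun _ _ => hΔ.subset_of_facetAdj hn hS hSf) (hp₀ ▸ hCS)
    (hvD (Finset.mem_singleton_self v))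

lemma exists_simplex_of_window {n : ℕ} {faces : Finset V → Prop} (hn : 0 < n) (x : ℕ → V)
    (hflag : ∀ i, IsFlag n faces (window x n i)) (hne : ∀ i, x i ≠ x (i + n))
    (hper : ∀ i, x (i + (n + 1)) = x i) :
    ∃ S : Finset V, S.card = n + 1 ∧ ∀ X ⊆ S, X.card = n → faces X := by
  set S := (window x (n + 1) 0).toFinset
  have hnodup : ∀ i, (window x (n + 1) i).Nodup := fun i =>
    nodup_window_succ x hn (hflag i).2.1 (hflag (i + 1)).2.1 (hne i)
  have hS : ∀ i, (window x (n + 1) i).toFinset = S := by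
    intro i
    induction i with
    | zero => rfl
    | succ i ih => rw [toFinset_window_succ_of_periodic x hper, ih]
  have herase : ∀ i, S.erase (x i) = (window x n (i + 1)).toFinset := by
    intro i
    have hi := hnodup i
    rw [window_succ_left] at hi
    rw [← hS i, window_succ_left, List.toFinset_cons,
      Finset.erase_insert (by simpa using (List.nodup_cons.1 hi).1)]
  have hcard : S.card = n + 1 := by rw [List.toFinset_card_of_nodup (hnodup 0), length_window]
  refine ⟨S, hcard, fun X hXS hXc => ?_⟩
  obtain ⟨a, haX, hXa⟩ := Finset.exists_eq_insert_iff.2 ⟨hXS, by rw [hXc, hcard]⟩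
  have haS : a ∈ S := hXa ▸ Finset.mem_insert_self a X
  obtain ⟨k, -, rfl⟩ : ∃ k, k < n + 1 ∧ x k = a := by simpa [S, window] using haS
  rw [← Finset.erase_insert haX, hXa, herase]
  exact (hflag (k + 1)).2.2

lemma IsZigzag.card_eq_and_isFacet [Fintype V] {n : ℕ} {faces : Finset V → Prop}
    (hΔ : IsThinComplex n faces) (hconn : ChamberConnected n faces) {F : ℕ → List V}
    (hF : IsZigzag n faces (n + 1) F) :
    Fintype.card V = n + 1 ∧ ∀ X : Finset V, X.card = n → IsFacet n faces X := by
  obtain ⟨-, hstep, hperF, -⟩ := hF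
  have hn := (hstep 0).pos
  obtain ⟨x, rfl⟩ := exists_eq_window hn (fun i => (hstep i).1.1)
    (fun i => (hstep i).2.2.imp fun _ h => h.1)
  have hwin := fun i => (tStep_window_iff hn x i).1 (hstep i)
  obtain ⟨S, hS, hSf⟩ := exists_simplex_of_window hn x (fun i => (hwin i).1)
    (fun i => (hwin i).2.2) ((window_periodic_iff hn x _).1 hperF)
  obtain rfl := hconn.eq_univ hΔ hn hS hSf
  exact ⟨hS, fun X hX => ⟨hSf X (Finset.subset_univ X) hX, hX⟩⟩

lemma exists_eq_iff_modEq_of_card_eq [Fintype V] {k : ℕ} [NeZero k] (h : Fintype.card V = k) :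
    ∃ x : ℕ → V, ∀ a b, x a = x b ↔ a ≡ b [MOD k] := by
  let e : V ≃ ZMod k := Fintype.equivOfCardEq (by rw [h, ZMod.card])
  exact ⟨fun i => e.symm i, fun a b => e.symm.injective.eq_iff.trans (ZMod.natCast_eq_natCast_iff ..)⟩

lemma isZigzag_window_of_modEq {n : ℕ} {faces : Finset V → Prop} (hn : 0 < n) (x : ℕ → V)
    (hx : ∀ a b, x a = x b ↔ a ≡ b [MOD n + 1])
    (hfacet : ∀ X : Finset V, X.card = n → IsFacet n faces X) :
    IsZigzag n faces (n + 1) (window x n) := by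
  have hflag : ∀ i, IsFlag n faces (window x n i) := by
    intro i
    have hnd : (window x n i).Nodup := List.Nodup.map_on (fun j hj k hk h =>
      ((hx _ _).1 h).add_left_cancel' i |>.eq_of_lt_of_lt
        (by simp at hj; omega) (by simp at hk; omega)) List.nodup_range
    exact ⟨length_window x n i, hnd,
      (hfacet _ (by rw [List.toFinset_card_of_nodup hnd, length_window])).1⟩
  refine ⟨n.succ_pos, fun i => (tStep_window_iff hn x i).2 ⟨hflag i, hflag (i + 1), fun h => ?_⟩,
    (window_periodic_iff hn x _).2 fun i => (hx _ _).2 Nat.add_modEq_right, fun m hm hper => ?_⟩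
  · have h0n : 0 ≡ n [MOD n + 1] := ((hx i (i + n)).1 h).add_left_cancel' i
    exact hn.ne (h0n.eq_of_lt_of_lt n.succ_pos n.lt_succ_self)
  · have hm0 := (hx _ _).1 ((window_periodic_iff hn x m).1 hper 0)
    rw [Nat.zero_add] at hm0
    exact Nat.le_of_dvd hm (Nat.modEq_zero_iff_dvd.1 hm0)

/-- A thin chamber complex of rank `n` contains a zigzag of length `n + 1` iff it
is the `n`-simplex: its vertex set has `n + 1` elements and every `n`-element subset of
vertices is a facet. -/
theorem stmt9 [Fintype V] (n : ℕ) (faces : Finset V → Prop) (hΔ : IsThinComplex n faces)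
    (hconn : ChamberConnected n faces) :
    (∃ F : ℕ → List V, IsZigzag n faces (n + 1) F) ↔
      Fintype.card V = n + 1 ∧ ∀ X : Finset V, X.card = n → IsFacet n faces X := by
  refine ⟨fun ⟨F, hF⟩ => hF.card_eq_and_isFacet hΔ hconn, fun ⟨hcard, hfacet⟩ => ?_⟩
  have : Nonempty V := Fintype.card_pos_iff.1 (by omega)
  obtain ⟨x, hx⟩ := exists_eq_iff_modEq_of_card_eq hcard
  exact ⟨_, isZigzag_window_of_modEq hΔ.pos x hx hfacet⟩
end

section
/- Every zigzag in the cross-polytope β_n has length 2n, and the 0-shadow of every zigzag is (up to cyclic shift) of the form i_1, ..., i_n, -i_1, ..., -i_n, where {i_1,...,i_n} is a facet of β_n. Consequently there are exactly 2^{n-2}·(n-1)! zigzags for n ≥ 2 (identifying each zigzag with its reverse). -/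
open scoped Classical

variable {V : Type*}

/-- Faces of the cross-polytope `β_n`: subsets of `{±1,…,±n}` (encoded as `Fin n × Bool`)
containing no antipodal pair. -/
def crossFaces (n : ℕ) (X : Finset (Fin n × Bool)) : Prop :=
  ∀ p ∈ X, (p.1, !p.2) ∉ X


/-! The zigzag operator of `β_n` is forced: `T` drops the first vertex `x` of a flag and must
append `-x`, because the new vertex has to lie over the coordinate that was just freed and must
differ from `x`. Hence `Tᵏ` rotates the doubled word `x_0 ⋯ x_{n-1} (-x_0) ⋯ (-x_{n-1})`, every
orbit has exactly `2n` flags, and the leading vertices of these `2n` flags are pairwise distinct.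
Reading two consecutive vertices shows that no reversed flag of a zigzag lies on the zigzag
itself when `n ≥ 2`, so the zigzags together with their reverses partition the `2ⁿ n!` flags
into classes of `4n` flags each. -/

namespace Function

variable {α : Type*} {f g : α → α} {x : α}

theorem iterate_apply_iterate_of_apply_apply (h : ∀ y, f (g (f y)) = g y) (k : ℕ) (y : α) :
    f^[k] (g (f^[k] y)) = g y := by
  induction k with
  | zero => rfl
  | succ k ih => rw [iterate_succ_apply, iterate_succ_apply', h, ih]

theorem range_iterate_apply_iterate (hx : x ∈ periodicPts f) (i : ℕ) :
    Set.range (fun k => f^[k] (f^[i] x)) = Set.range (fun k => f^[k] x) := by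
  obtain ⟨P, hP, hxP⟩ := hx
  apply Set.Subset.antisymm
  · rintro _ ⟨k, rfl⟩
    exact ⟨k + i, iterate_add_apply f k i x⟩
  · rintro _ ⟨k, rfl⟩
    refine ⟨k + P * i - i, ?_⟩
    have hi : i ≤ k + P * i := le_add_left (Nat.le_mul_of_pos_left i hP)
    dsimp only
    rw [← iterate_add_apply, Nat.sub_add_cancel hi, iterate_add_apply, (hxP.mul_const i).eq]

theorem image_range_iterate_subset (h : ∀ y, f (g (f y)) = g y) (hx : x ∈ periodicPts f) :
    g '' Set.range (fun k => f^[k] x) ⊆ Set.range (fun k => f^[k] (g x)) := by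
  obtain ⟨P, hP, hxP⟩ := hx
  rintro _ ⟨_, ⟨j, rfl⟩, rfl⟩
  refine ⟨P * j - j, ?_⟩
  have hback : f^[P * j - j] (f^[j] x) = x := by
    rw [← iterate_add_apply, Nat.sub_add_cancel (Nat.le_mul_of_pos_left j hP),
      (hxP.mul_const j).eq]
  dsimp only
  rw [← iterate_apply_iterate_of_apply_apply h (P * j - j) (f^[j] x), hback]

theorem image_range_iterate_eq (hg : Involutive g) (h : ∀ y, f (g (f y)) = g y)
    (hx : x ∈ periodicPts f) (hgx : g x ∈ periodicPts f) :
    g '' Set.range (fun k => f^[k] x) = Set.range (fun k => f^[k] (g x)) := by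
  refine (image_range_iterate_subset h hx).antisymm fun y hy => ⟨g y, ?_, hg y⟩
  simpa only [hg x] using image_range_iterate_subset h hgx ⟨y, hy, rfl⟩

theorem ncard_range_iterate (hx : x ∈ periodicPts f) :
    (Set.range fun k => f^[k] x).ncard = minimalPeriod f x := by
  have hrange : Set.range (fun k => f^[k] x) = (f^[·] x) '' Set.Iio (minimalPeriod f x) := by
    refine (Set.range_subset_iff.2 fun k => ?_).antisymm (Set.image_subset_range _ _)
    exact ⟨k % minimalPeriod f x, Nat.mod_lt _ (minimalPeriod_pos_of_mem_periodicPts hx),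
      iterate_mod_minimalPeriod_eq⟩
  rw [hrange, iterate_injOn_Iio_minimalPeriod.ncard_image, Set.ncard_Iio_nat]

end Function

theorem Set.mul_ncard_image_eq_ncard {α : Type*} {X : Set α} (hX : X.Finite) {c : α → Set α}
    {k : ℕ} (hself : ∀ x ∈ X, x ∈ c x) (hc : ∀ x ∈ X, ∀ y ∈ c x, c y = c x)
    (hsub : ∀ x ∈ X, c x ⊆ X) (hk : ∀ x ∈ X, (c x).ncard = k) :
    k * (c '' X).ncard = X.ncard := by
  have hfiber : ∀ x ∈ X, {y ∈ hX.toFinset | c y = c x}.card = k := by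
    intro x hx
    rw [← hk x hx, ← Set.ncard_coe_finset, Finset.coe_filter]
    congr 1
    ext y
    simp only [Set.Finite.mem_toFinset, Set.mem_ofPred_eq]
    exact ⟨fun ⟨hy, hcy⟩ => hcy ▸ hself y hy, fun hy => ⟨hsub x hx hy, hc x hx y hy⟩⟩
  rw [Set.ncard_eq_toFinset_card X hX, Finset.card_eq_sum_card_image c,
    Finset.sum_congr rfl fun S hS => ?_, Finset.sum_const, smul_eq_mul, mul_comm,
    ← Set.ncard_coe_finset, Finset.coe_image, hX.coe_toFinset]
  obtain ⟨x, hx, rfl⟩ := Finset.mem_image.1 hS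
  exact hfiber x (hX.mem_toFinset.1 hx)

section Zigzag

variable {n : ℕ} {faces : Finset V → Prop} {l : ℕ} {F : ℕ → List V}

theorem IsZigzag.eq_minimalPeriod {f : List V → List V} (hz : IsZigzag n faces l F)
    (hF : ∀ i, F i = f^[i] (F 0)) : l = Function.minimalPeriod f (F 0) := by
  obtain ⟨hl, -, hper, hmin⟩ := hz
  have hperiodic : Function.IsPeriodicPt f l (F 0) := by
    simpa only [Function.IsPeriodicPt, Function.IsFixedPt, zero_add, ← hF] using hper 0
  refine le_antisymm (hmin _ (hperiodic.minimalPeriod_pos hl) fun i => ?_)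
    (hperiodic.minimalPeriod_le hl)
  rw [hF, hF i, Function.iterate_add_minimalPeriod_eq]

theorem isZigzag_minimalPeriod_iterate {f : List V → List V} {x : List V}
    (hx : x ∈ Function.periodicPts f) (hstep : ∀ i, TStep n faces (f^[i] x) (f^[i + 1] x)) :
    IsZigzag n faces (Function.minimalPeriod f x) (f^[·] x) := by
  refine ⟨Function.minimalPeriod_pos_of_mem_periodicPts hx, hstep,
    fun i => Function.iterate_add_minimalPeriod_eq, fun m hm hper => ?_⟩
  have hperiodic : f^[m] x = x := by simpa using hper 0
  exact Function.IsPeriodicPt.minimalPeriod_le hm hperiodic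

theorem zigzagClass_eq (F : ℕ → List V) :
    ZigzagClass F = Set.range F ∪ List.reverse '' Set.range F := by
  rw [ZigzagClass, ← Set.range_comp]
  rfl

end Zigzag

section CrossStep

variable {α : Type*}

def antipode (p : α × Bool) : α × Bool := (p.1, !p.2)

@[simp]
theorem antipode_antipode (p : α × Bool) : antipode (antipode p) = p := by
  simp [antipode]

theorem antipode_ne_self (p : α × Bool) : antipode p ≠ p := by
  simp [antipode, Prod.ext_iff]

theorem eq_or_eq_antipode_of_fst_eq {p q : α × Bool} (h : p.1 = q.1) :
    q = p ∨ q = antipode p := by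
  rcases p with ⟨a, b⟩
  rcases q with ⟨c, d⟩
  cases b <;> cases d <;> simp_all [antipode]

/-- The zigzag operator `T` of `β_n` on vertex sequences of flags (see `TStep.eq_crossStep`). -/
def crossStep : List (α × Bool) → List (α × Bool)
  | [] => []
  | a :: t => t ++ [antipode a]

@[simp]
theorem crossStep_nil : crossStep ([] : List (α × Bool)) = [] := rfl

@[simp]
theorem crossStep_cons (a : α × Bool) (t : List (α × Bool)) :
    crossStep (a :: t) = t ++ [antipode a] := rfl

@[simp]
theorem length_crossStep (l : List (α × Bool)) : (crossStep l).length = l.length := by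
  cases l <;> simp

@[simp]
theorem length_iterate_crossStep (k : ℕ) (l : List (α × Bool)) :
    (crossStep^[k] l).length = l.length := by
  induction k generalizing l with
  | zero => rfl
  | succ k ih => rw [Function.iterate_succ_apply, ih, length_crossStep]

theorem crossStep_reverse_crossStep (l : List (α × Bool)) :
    crossStep (crossStep l).reverse = l.reverse := by
  cases l <;> simp

theorem iterate_crossStep_of_le {k : ℕ} {l : List (α × Bool)} (hk : k ≤ l.length) :
    crossStep^[k] l = l.drop k ++ (l.take k).map antipode := by
  induction k with
  | zero => simp
  | succ k ih =>
    have hk' : k < l.length := hk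
    rw [Function.iterate_succ_apply', ih hk'.le, List.drop_eq_getElem_cons hk',
      List.cons_append, crossStep_cons, List.take_add_one, List.getElem?_eq_getElem hk']
    simp only [Option.toList_some, List.map_append, List.map_cons, List.map_nil,
      List.append_assoc]

theorem iterate_crossStep_of_length_eq {k : ℕ} {l : List (α × Bool)} (h : l.length = k) :
    crossStep^[k] l = l.map antipode := by
  subst h
  simp [iterate_crossStep_of_le le_rfl]

theorem isPeriodicPt_crossStep {k : ℕ} {l : List (α × Bool)} (h : l.length = k) :
    Function.IsPeriodicPt crossStep (2 * k) l := by
  rw [Function.IsPeriodicPt, Function.IsFixedPt, two_mul, Function.iterate_add_apply,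
    iterate_crossStep_of_length_eq h, iterate_crossStep_of_length_eq (by simpa using h)]
  simp [Function.comp_def]

theorem mem_periodicPts_crossStep (l : List (α × Bool)) : l ∈ Function.periodicPts crossStep := by
  cases l with
  | nil => exact ⟨1, one_pos, rfl⟩
  | cons a t => exact ⟨_, by simp, isPeriodicPt_crossStep rfl⟩

theorem head?_iterate_crossStep {k : ℕ} {l : List (α × Bool)} (hk : k < l.length) :
    (crossStep^[k] l).head? = l[k]? := by
  rw [iterate_crossStep_of_le hk.le, List.head?_append, List.head?_drop]
  simp [List.getElem?_eq_getElem hk]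

theorem head?_iterate_crossStep_add {k : ℕ} {l : List (α × Bool)} (h : l.length = k) (i : ℕ) :
    (crossStep^[i + k] l).head? = (crossStep^[i] l).head?.map antipode := by
  rw [add_comm, Function.iterate_add_apply,
    iterate_crossStep_of_length_eq ((length_iterate_crossStep i l).trans h), List.head?_map]

theorem range_iterate_crossStep_reverse (l : List (α × Bool)) :
    Set.range (crossStep^[·] l.reverse) = List.reverse '' Set.range (crossStep^[·] l) :=
  (Function.image_range_iterate_eq List.reverse_involutive crossStep_reverse_crossStep
    (mem_periodicPts_crossStep l) (mem_periodicPts_crossStep _)).symm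

theorem zigzagClass_iterate_crossStep_eq_of_mem {l m : List (α × Bool)}
    (hm : m ∈ ZigzagClass (crossStep^[·] l)) :
    ZigzagClass (crossStep^[·] m) = ZigzagClass (crossStep^[·] l) := by
  rw [zigzagClass_eq] at hm
  simp only [zigzagClass_eq]
  rcases hm with ⟨i, rfl⟩ | ⟨_, ⟨i, rfl⟩, rfl⟩
  · rw [Function.range_iterate_apply_iterate (mem_periodicPts_crossStep l)]
  · rw [range_iterate_crossStep_reverse,
      Function.range_iterate_apply_iterate (mem_periodicPts_crossStep l),
      Set.image_image]
    simp only [List.reverse_reverse, Set.image_id', Set.union_comm]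

end CrossStep

section CrossFlags

variable {n : ℕ} {l m : List (Fin n × Bool)}

theorem isFlag_crossFaces_iff :
    IsFlag n (crossFaces n) l ↔ l.length = n ∧ l.Nodup ∧ ∀ p ∈ l, antipode p ∉ l := by
  simp [IsFlag, crossFaces, antipode]

theorem IsFlag.antipode_notMem (hl : IsFlag n (crossFaces n) l) {p : Fin n × Bool}
    (hp : p ∈ l) : antipode p ∉ l :=
  (isFlag_crossFaces_iff.1 hl).2.2 p hp

theorem isFlag_crossStep (hl : IsFlag n (crossFaces n) l) :
    IsFlag n (crossFaces n) (crossStep l) := by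
  obtain ⟨hlen, hnd, hanti⟩ := isFlag_crossFaces_iff.1 hl
  cases l with
  | nil => simpa using hl
  | cons a t =>
    simp only [List.nodup_cons, List.mem_cons, forall_eq_or_imp] at hnd hanti
    refine isFlag_crossFaces_iff.2 ⟨by simpa using hlen, ?_, ?_⟩
    · exact List.nodup_append.2 ⟨hnd.2, List.nodup_singleton _,
        fun p hp q hq => by rintro rfl; exact hanti.1 (.inr (List.mem_singleton.1 hq ▸ hp))⟩
    · simp only [crossStep_cons, List.mem_append, List.mem_singleton]
      rintro p (hp | rfl)
      · rintro (hp' | hp')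
        · exact hanti.2 p hp (.inr hp')
        · rw [← antipode_antipode p, hp', antipode_antipode] at hp
          exact hnd.1 hp
      · rw [antipode_antipode]
        rintro (ha | ha)
        · exact hnd.1 ha
        · exact antipode_ne_self a ha.symm

theorem IsFlag.iterate_crossStep (hl : IsFlag n (crossFaces n) l) (k : ℕ) :
    IsFlag n (crossFaces n) (crossStep^[k] l) := by
  induction k with
  | zero => exact hl
  | succ k ih => rw [Function.iterate_succ_apply']; exact isFlag_crossStep ih

theorem IsFlag.reverse (hl : IsFlag n (crossFaces n) l) : IsFlag n (crossFaces n) l.reverse := by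
  obtain ⟨hlen, hnd, hanti⟩ := isFlag_crossFaces_iff.1 hl
  exact isFlag_crossFaces_iff.2 ⟨by simpa using hlen, List.nodup_reverse.2 hnd, by simpa using hanti⟩

theorem IsFlag.fst_get_injective (hl : IsFlag n (crossFaces n) l) :
    Function.Injective fun i : Fin n => (l.get (i.cast hl.1.symm)).1 := by
  intro i j hij
  rcases eq_or_eq_antipode_of_fst_eq hij with h | h
  · exact Fin.cast_injective _ ((isFlag_crossFaces_iff.1 hl).2.1.get_inj_iff.1 h.symm)
  · exact absurd (h ▸ List.get_mem l _) (hl.antipode_notMem (List.get_mem l _))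

theorem IsFlag.exists_mem_fst_eq (hl : IsFlag n (crossFaces n) l) (c : Fin n) :
    ∃ p ∈ l, p.1 = c := by
  obtain ⟨i, hi⟩ := Finite.injective_iff_surjective.1 hl.fst_get_injective c
  exact ⟨_, List.get_mem l _, hi⟩

theorem TStep.eq_crossStep (h : TStep n (crossFaces n) l m) : m = crossStep l := by
  obtain ⟨hl, hm, y, rfl, hy⟩ := h
  obtain ⟨-, hnd, hanti⟩ := isFlag_crossFaces_iff.1 hm
  cases l with
  | nil => simpa using hm.1.trans hl.1.symm
  | cons a t =>
    simp only [List.head?_cons, ne_eq, Option.some_inj] at hy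
    suffices y = antipode a by simp [this]
    obtain ⟨p, hp, hpy⟩ := hl.exists_mem_fst_eq y.1
    obtain ⟨rfl | hpt, rfl | rfl⟩ :=
      And.intro (List.mem_cons.1 hp) (eq_or_eq_antipode_of_fst_eq hpy)
    · exact absurd rfl hy
    · rfl
    · exact absurd hpt (by simpa using List.nodup_append_comm.1 hnd : y ∉ t ∧ t.Nodup).1
    · exact (hanti (antipode p) (by simp) (by simp [hpt])).elim

theorem IsFlag.tStep_crossStep (hl : IsFlag n (crossFaces n) l) (hn : 0 < n) :
    TStep n (crossFaces n) l (crossStep l) := by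
  refine ⟨hl, isFlag_crossStep hl, ?_⟩
  cases l with
  | nil => exact absurd (by simpa using hl.1) hn.ne
  | cons a t => exact ⟨antipode a, rfl, by simpa using (antipode_ne_self a).symm⟩

/-- Within one period, the leading vertex `x_d` of `Tᵈ` differs from `x_0`: for `d < n` it is
another vertex of the flag, for `n ≤ d` it is the antipode of one. -/
theorem IsFlag.head?_iterate_crossStep_ne (hl : IsFlag n (crossFaces n) l) {d : ℕ} (hd : 0 < d)
    (hd' : d < 2 * n) : (crossStep^[d] l).head? ≠ l.head? := by
  obtain ⟨hlen, hnd, -⟩ := isFlag_crossFaces_iff.1 hl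
  have h0 : 0 < l.length := by omega
  have hhead : l.head? = some (l[0]'h0) := by
    rw [List.head?_eq_getElem?, List.getElem?_eq_getElem h0]
  rw [hhead]
  rcases lt_or_ge d n with hdn | hdn
  · rw [head?_iterate_crossStep (by omega), List.getElem?_eq_getElem (by omega), ne_eq,
      Option.some_inj, hnd.getElem_inj_iff]
    omega
  · rw [← Nat.sub_add_cancel hdn, Function.iterate_add_apply, iterate_crossStep_of_length_eq hlen,
      head?_iterate_crossStep (by rw [List.length_map]; omega), List.getElem?_map,
      List.getElem?_eq_getElem (by omega), Option.map_some, ne_eq, Option.some_inj]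
    intro h
    exact hl.antipode_notMem (List.getElem_mem _) (h ▸ List.getElem_mem h0)

theorem IsFlag.minimalPeriod_crossStep (hl : IsFlag n (crossFaces n) l) (hn : 0 < n) :
    Function.minimalPeriod crossStep l = 2 * n := by
  have hper := isPeriodicPt_crossStep hl.1
  refine le_antisymm (hper.minimalPeriod_le (by omega)) (not_lt.1 fun hlt => ?_)
  exact hl.head?_iterate_crossStep_ne (hper.minimalPeriod_pos (by omega)) hlt
    (congrArg List.head? Function.iterate_minimalPeriod)

theorem IsFlag.mod_eq_of_head?_iterate_crossStep_eq (hl : IsFlag n (crossFaces n) l)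
    (hn : 0 < n) {a b : ℕ} (h : (crossStep^[a] l).head? = (crossStep^[b] l).head?) :
    a % (2 * n) = b % (2 * n) := by
  wlog hab : a % (2 * n) ≤ b % (2 * n) generalizing a b
  · exact (this h.symm (le_of_not_ge hab)).symm
  have hper := isPeriodicPt_crossStep hl.1
  rw [← hper.iterate_mod_apply a, ← hper.iterate_mod_apply b, ← Nat.sub_add_cancel hab,
    Function.iterate_add_apply] at h
  by_contra hne
  have hb := Nat.mod_lt b (show 0 < 2 * n by omega)
  exact (hl.iterate_crossStep _).head?_iterate_crossStep_ne (by omega) (by omega) h.symm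

theorem IsFlag.getElem?_iterate_crossStep (hl : IsFlag n (crossFaces n) l) (i : ℕ) {k : ℕ}
    (hk : k < n) : (crossStep^[i] l)[k]? = (crossStep^[i + k] l).head? := by
  rw [add_comm, Function.iterate_add_apply, head?_iterate_crossStep (by simpa [hl.1])]

/-- A flag `x_i, x_{i+1}, …` of the zigzag cannot equal a reversed one `x_{j+n-1}, x_{j+n-2}, …`:
the shadow would give `i ≡ j + n - 1` and `i + 1 ≡ j + n - 2` modulo `2n`. -/
theorem IsFlag.disjoint_range_iterate_crossStep_reverse (hl : IsFlag n (crossFaces n) l)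
    (hn : 2 ≤ n) :
    Disjoint (Set.range (crossStep^[·] l)) (List.reverse '' Set.range (crossStep^[·] l)) := by
  rw [Set.disjoint_left]
  rintro _ ⟨i, rfl⟩ ⟨_, ⟨j, rfl⟩, h⟩
  dsimp only at h
  have hshadow (k : ℕ) (hk : k < n) :
      (crossStep^[i + k] l).head? = (crossStep^[j + (n - 1 - k)] l).head? := by
    rw [← hl.getElem?_iterate_crossStep i hk, ← h, List.getElem?_reverse (by simp [hl.1, hk]),
      length_iterate_crossStep, hl.1, hl.getElem?_iterate_crossStep j (by omega)]
  have h0 : i % (2 * n) = (j + (n - 1)) % (2 * n) := by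
    simpa using hl.mod_eq_of_head?_iterate_crossStep_eq (by omega) (hshadow 0 (by omega))
  have h1 : (i + 1) % (2 * n) = (j + (n - 2)) % (2 * n) := by
    simpa [Nat.sub_sub] using
      hl.mod_eq_of_head?_iterate_crossStep_eq (by omega) (hshadow 1 (by omega))
  have h2 : j + (n - 2) + 2 ≡ j + (n - 2) + 0 [MOD 2 * n] := by
    have e : j + (n - 2) + 2 = j + (n - 1) + 1 := by omega
    rw [e, add_zero]
    exact (Nat.ModEq.add_right 1 h0).symm.trans h1
  have := Nat.ModEq.add_left_cancel' _ h2
  rw [Nat.ModEq, Nat.mod_eq_of_lt (by omega), Nat.zero_mod] at this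
  omega

end CrossFlags

theorem ncard_setOf_isFlag_crossFaces (n : ℕ) :
    {l : List (Fin n × Bool) | IsFlag n (crossFaces n) l}.ncard = 2 ^ n * n.factorial := by
  let flagOf : Equiv.Perm (Fin n) × (Fin n → Bool) → List (Fin n × Bool) :=
    fun σs => List.ofFn fun i => (σs.1 i, σs.2 i)
  have hinj : Function.Injective flagOf := by
    rintro ⟨σ, s⟩ ⟨τ, t⟩ h
    have h' := List.ofFn_injective h
    simp only [funext_iff, Prod.mk.injEq, forall_and] at h'
    exact Prod.ext (Equiv.ext h'.1) (funext h'.2)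
  have hrange : Set.range flagOf = {l | IsFlag n (crossFaces n) l} := by
    ext l
    constructor
    · rintro ⟨⟨σ, s⟩, rfl⟩
      refine isFlag_crossFaces_iff.2 ⟨List.length_ofFn,
        List.nodup_ofFn.2 fun i j h => σ.injective (congrArg Prod.fst h), ?_⟩
      simp only [flagOf, List.mem_ofFn]
      rintro _ ⟨i, rfl⟩ ⟨j, h⟩
      obtain rfl := σ.injective (congrArg Prod.fst h)
      simpa [antipode] using congrArg Prod.snd h
    · intro hl
      refine ⟨(Equiv.ofBijective _ (Finite.injective_iff_bijective.1 hl.fst_get_injective),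
        fun i => (l.get (i.cast hl.1.symm)).2), ?_⟩
      exact List.ext_get (by simp [flagOf, hl.1]) fun k _ _ => by simp [flagOf]
  rw [← hrange, Set.ncard_range_of_injective hinj, Nat.card_eq_fintype_card, Fintype.card_prod,
    Fintype.card_perm, Fintype.card_fun, Fintype.card_fin, Fintype.card_bool, mul_comm]

theorem IsZigzag.eq_iterate_crossStep {n l : ℕ} {F : ℕ → List (Fin n × Bool)}
    (hz : IsZigzag n (crossFaces n) l F) (i : ℕ) : F i = crossStep^[i] (F 0) := by
  induction i with
  | zero => rfl
  | succ i ih => rw [Function.iterate_succ_apply', ← ih, (hz.2.1 i).eq_crossStep]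

theorem setOf_zigzagClass_crossFaces_eq_image {n : ℕ} (hn : 0 < n) :
    {S : Set (List (Fin n × Bool)) | ∃ (l : ℕ) (F : ℕ → List (Fin n × Bool)),
        IsZigzag n (crossFaces n) l F ∧ S = ZigzagClass F} =
      (fun l => ZigzagClass (crossStep^[·] l)) '' {l | IsFlag n (crossFaces n) l} := by
  ext S
  constructor
  · rintro ⟨l, F, hz, rfl⟩
    exact ⟨F 0, (hz.2.1 0).1, congrArg ZigzagClass (funext hz.eq_iterate_crossStep).symm⟩
  · rintro ⟨l, hl, rfl⟩
    refine ⟨_, _, isZigzag_minimalPeriod_iterate (mem_periodicPts_crossStep l) fun i => ?_, rfl⟩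
    rw [Function.iterate_succ_apply']
    exact (hl.iterate_crossStep i).tStep_crossStep hn

theorem IsFlag.ncard_zigzagClass_iterate_crossStep {n : ℕ} {l : List (Fin n × Bool)}
    (hl : IsFlag n (crossFaces n) l) (hn : 2 ≤ n) :
    (ZigzagClass (crossStep^[·] l)).ncard = 4 * n := by
  have horbit : (Set.range (crossStep^[·] l)).ncard = 2 * n := by
    rw [Function.ncard_range_iterate (mem_periodicPts_crossStep l),
      hl.minimalPeriod_crossStep (by omega)]
  have hfin : (Set.range (crossStep^[·] l)).Finite := Set.finite_of_ncard_pos (by omega)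
  rw [zigzagClass_eq, Set.ncard_union_eq (hl.disjoint_range_iterate_crossStep_reverse hn) hfin
    (hfin.image _), Set.ncard_image_of_injective _ List.reverse_injective, horbit]
  ring

theorem IsFlag.zigzagClass_iterate_crossStep_subset {n : ℕ} {l : List (Fin n × Bool)}
    (hl : IsFlag n (crossFaces n) l) :
    ZigzagClass (crossStep^[·] l) ⊆ {m | IsFlag n (crossFaces n) m} := by
  rw [zigzagClass_eq]
  rintro _ (⟨i, rfl⟩ | ⟨_, ⟨i, rfl⟩, rfl⟩)
  · exact hl.iterate_crossStep i
  · exact (hl.iterate_crossStep i).reverse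

theorem four_mul_ncard_setOf_zigzagClass_crossFaces {n : ℕ} (hn : 2 ≤ n) :
    4 * n * {S : Set (List (Fin n × Bool)) | ∃ (l : ℕ) (F : ℕ → List (Fin n × Bool)),
        IsZigzag n (crossFaces n) l F ∧ S = ZigzagClass F}.ncard = 2 ^ n * n.factorial := by
  have hflags := ncard_setOf_isFlag_crossFaces n
  have hfinite : {l | IsFlag n (crossFaces n) l}.Finite :=
    Set.finite_of_ncard_pos (by rw [hflags]; positivity)
  rw [setOf_zigzagClass_crossFaces_eq_image (by omega), ← hflags]
  exact Set.mul_ncard_image_eq_ncard hfinite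
    (fun l _ => (Or.inl ⟨0, rfl⟩ : l ∈ ZigzagClass (crossStep^[·] l)))
    (fun _ _ _ => zigzagClass_iterate_crossStep_eq_of_mem)
    (fun _ hl => IsFlag.zigzagClass_iterate_crossStep_subset hl)
    (fun _ hl => IsFlag.ncard_zigzagClass_iterate_crossStep hl hn)

/-- Every zigzag in the cross-polytope `β_n` has length `2n`, its 0-shadow
satisfies `x_{i+n} = -x_i` (so, up to cyclic shift, it has the form
`i_1, …, i_n, -i_1, …, -i_n` with `{i_1,…,i_n}` a facet), and for `n ≥ 2` there are exactly
`2^{n-2}·(n-1)!` zigzags, identifying each zigzag with its reverse. -/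
theorem stmt10 (n : ℕ) (hn : 2 ≤ n) :
    (∀ (l : ℕ) (F : ℕ → List (Fin n × Bool)), IsZigzag n (crossFaces n) l F →
      l = 2 * n ∧ ∀ i : ℕ, (F (i + n)).head? = ((F i).head?).map fun p => (p.1, !p.2)) ∧
    {S : Set (List (Fin n × Bool)) | ∃ (l : ℕ) (F : ℕ → List (Fin n × Bool)),
        IsZigzag n (crossFaces n) l F ∧ S = ZigzagClass F}.ncard =
      2 ^ (n - 2) * (n - 1).factorial := by
  refine ⟨fun l F hz => ?_, ?_⟩
  · have hF := hz.eq_iterate_crossStep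
    have hflag : IsFlag n (crossFaces n) (F 0) := (hz.2.1 0).1
    refine ⟨(hz.eq_minimalPeriod hF).trans (hflag.minimalPeriod_crossStep (by omega)), fun i => ?_⟩
    rw [hF, hF i]
    exact head?_iterate_crossStep_add hflag.1 i
  · have hcount := four_mul_ncard_setOf_zigzagClass_crossFaces hn
    obtain ⟨m, rfl⟩ : ∃ m, n = m + 2 := ⟨n - 2, by omega⟩
    refine Nat.eq_of_mul_eq_mul_left (show 0 < 4 * (m + 2) by omega) ?_
    rw [hcount, Nat.add_sub_cancel, show m + 2 - 1 = m + 1 from rfl, Nat.factorial_succ,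
      Nat.factorial_succ, pow_add]
    ring
end

section
/- Let (W, S) be a finite Coxeter system with S = {s_1,...,s_n}, and let δ be a permutation of {1,...,n} with Coxeter element s_δ = s_{δ(1)}···s_{δ(n)}. Let E_δ be the flag of the Coxeter complex Σ(W,S) given by the vertex sequence W^{δ(1)}, ..., W^{δ(n)}, where W^i is the subgroup generated by S∖{s_i}. Then T^n(E_δ) = L_{s_δ}(E_δ), where L_{s_δ} is the automorphism of Σ(W,S) induced by left multiplication by s_δ. -/
open scoped Classical

variable {V : Type*}

/-- The standard parabolic subgroup `W^i = ⟨S ∖ {s_i}⟩` of a Coxeter system. -/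
def coxParab {B : Type*} {W : Type*} [Group W] {M : CoxeterMatrix B}
    (cs : CoxeterSystem M W) (i : B) : Subgroup W :=
  Subgroup.closure (cs.simple '' {j : B | j ≠ i})

/-- The vertex `w·W^i` of the Coxeter complex `Σ(W,S)`, as a subset of `W`. -/
def coxVertex {B : Type*} {W : Type*} [Group W] {M : CoxeterMatrix B}
    (cs : CoxeterSystem M W) (w : W) (i : B) : Set W :=
  (fun x => w * x) '' (coxParab cs i : Set W)

/-- Faces of the Coxeter complex `Σ(W,S)`: sets of vertices of the form
`{w·W^{i_1}, …, w·W^{i_k}}`. -/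
def coxFaces {B : Type*} {W : Type*} [Group W] {M : CoxeterMatrix B}
    (cs : CoxeterSystem M W) (X : Finset (Set W)) : Prop :=
  ∃ (w : W) (I : Finset B), X = I.image fun i => coxVertex cs w i

/-!
The simple reflections act on `W × ℤˣ` by `(t, ε) ↦ (sᵢ t sᵢ, ±ε)`, the sign flipping exactly
when `t = sᵢ`. These permutations satisfy the Coxeter relations, because every element occurs an
even number of times in the left inversion sequence of a braid word. The resulting action shows
that the parity of the number of occurrences of `t` in the left inversion sequence of a word for
`w` depends only on `w`, and that for `t = sᵢ` it is odd exactly when `ℓ(sᵢ w) < ℓ(w)`. This is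
the exchange condition; it implies that reduced words of elements of `W_J` only use letters from
`J`, hence `⋂_{j ≠ i} W^j = {1, sᵢ}`, so the panel of cotype `i` of a chamber `w` lies only in
the chambers `w` and `w sᵢ`.

With `w_k = s_{δ(0)} ⋯ s_{δ(k-1)}`, induction on `k` shows that `T^k(E_δ)` is the flag of the
chamber `w_k` read cyclically from its vertex of type `δ(k)`: `T` drops that vertex, the new
vertex must be `w_k s_{δ(k)} W^{δ(k)}`, and `w_{k+1} = w_k s_{δ(k)}` shares all vertices of the
other types with `w_k`. For `k = n` this is the flag of the chamber `s_δ` in the original order.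
-/

namespace CoxeterSystem

variable {B W : Type*} [Group W] {M : CoxeterMatrix B} (cs : CoxeterSystem M W)

local prefix:100 "s" => cs.simple
local prefix:100 "π" => cs.wordProd
local prefix:100 "ℓ" => cs.length
local prefix:100 "lis" => cs.leftInvSeq

noncomputable def signFlip (i : B) : Equiv.Perm (W × ℤˣ) :=
  Function.Involutive.toPerm (fun p => (s i * p.1 * s i, if p.1 = s i then -p.2 else p.2)) <| by
    rintro ⟨t, ε⟩
    by_cases ht : t = s i <;>
      simp [ht, mul_assoc, mul_eq_one_iff_eq_inv]

theorem signFlip_apply (i : B) (t : W) (ε : ℤˣ) :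
    cs.signFlip i (t, ε) = (s i * t * s i, if t = s i then -ε else ε) := rfl

theorem prod_map_signFlip_reverse_apply (ω : List B) (t : W) (ε : ℤˣ) :
    (ω.reverse.map cs.signFlip).prod (t, ε) =
      ((π ω)⁻¹ * t * π ω, (-1) ^ (lis ω).count t * ε) := by
  induction ω generalizing t ε with
  | nil => simp
  | cons i ω ih =>
    have hcount : ((lis ω).map (MulAut.conj (s i))).count t = (lis ω).count (s i * t * s i) := by
      rw [show t = MulAut.conj (s i) (s i * t * s i) by simp [mul_assoc],
        List.count_map_of_injective _ _ (MulAut.conj (s i)).injective]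
      simp [mul_assoc]
    simp only [List.reverse_cons, List.map_append, List.prod_append, List.map_singleton,
      List.prod_singleton, Equiv.Perm.mul_apply, signFlip_apply, ih, leftInvSeq, List.count_cons,
      hcount, wordProd_cons, mul_inv_rev, inv_simple, beq_iff_eq]
    refine Prod.ext (by simp [mul_assoc]) ?_
    by_cases ht : t = s i
    · simp [ht, pow_succ]
    · simp [ht, Ne.symm ht]

theorem prod_map_alternatingWord_reverse {G : Type*} [Monoid G] (f : B → G) (i j : B) (p : ℕ) :
    ((alternatingWord j i (2 * p)).reverse.map f).prod = (f i * f j) ^ p := by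
  induction p with
  | zero => simp [alternatingWord]
  | succ p ih =>
    rw [show 2 * (p + 1) = 2 * p + 1 + 1 by ring]
    rw [List.map_reverse] at ih
    simp [alternatingWord, ih, pow_succ', mul_assoc]

theorem even_count_leftInvSeq_alternatingWord {i j : B} {p : ℕ} (hp : (s i * s j) ^ p = 1)
    (t : W) : Even ((lis (alternatingWord j i (2 * p))).count t) := by
  set f : ℕ → W := fun k => s j * (s i * s j) ^ k
  have hlis : lis (alternatingWord j i (2 * p)) = (List.range (2 * p)).map f := by
    refine List.ext_getElem (by simp) fun k hk _ => ?_
    rw [cs.getElem_leftInvSeq_alternatingWord j i p k (by simpa using hk),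
      prod_alternatingWord_eq_mul_pow]
    simp [f, Nat.not_even_bit1, Nat.add_div_of_dvd_right]
  have hperiod : ∀ k, f (p + k) = f k := fun k => by simp [f, pow_add, hp]
  rw [hlis, two_mul, List.range_add, List.map_append, List.map_map, List.count_append]
  simp only [Function.comp_def, hperiod]
  exact Even.add_self _

theorem isLiftable_signFlip : M.IsLiftable cs.signFlip := by
  intro i j
  ext ⟨t, ε⟩ : 1
  rw [← prod_map_alternatingWord_reverse, prod_map_signFlip_reverse_apply,
    (cs.even_count_leftInvSeq_alternatingWord (cs.simple_mul_simple_pow i j) t).neg_one_pow,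
    prod_alternatingWord_eq_mul_pow]
  simp

noncomputable def signRep : W →* Equiv.Perm (W × ℤˣ) :=
  cs.lift ⟨cs.signFlip, cs.isLiftable_signFlip⟩

theorem signRep_inv_wordProd (ω : List B) :
    cs.signRep (π ω)⁻¹ = (ω.reverse.map cs.signFlip).prod := by
  rw [← wordProd_reverse, wordProd, map_list_prod, List.map_map]
  congr 2
  ext1 i
  exact cs.lift_apply_simple cs.isLiftable_signFlip i

noncomputable def inversionSign (w t : W) : ℤˣ := (cs.signRep w⁻¹ (t, 1)).2

theorem inversionSign_wordProd (ω : List B) (t : W) :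
    cs.inversionSign (π ω) t = (-1) ^ (lis ω).count t := by
  rw [inversionSign, signRep_inv_wordProd, prod_map_signFlip_reverse_apply, mul_one]

theorem signRep_inv_apply (w t : W) (ε : ℤˣ) :
    cs.signRep w⁻¹ (t, ε) = (w⁻¹ * t * w, cs.inversionSign w t * ε) := by
  obtain ⟨ω, rfl⟩ := cs.wordProd_surjective w
  rw [signRep_inv_wordProd, prod_map_signFlip_reverse_apply, inversionSign_wordProd]

theorem inversionSign_mul (u v t : W) :
    cs.inversionSign (u * v) t = cs.inversionSign v (u⁻¹ * t * u) * cs.inversionSign u t := by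
  rw [inversionSign, mul_inv_rev, map_mul, Equiv.Perm.mul_apply, signRep_inv_apply,
    signRep_inv_apply, mul_one]

theorem inversionSign_simple_simple (i : B) : cs.inversionSign (s i) (s i) = -1 := by
  simpa using cs.inversionSign_wordProd [i] (s i)

theorem exists_mul_wordProd_eq_wordProd_eraseIdx {ω : List B} {t : W}
    (h : cs.inversionSign (π ω) t = -1) :
    ∃ j < ω.length, t * π ω = π (ω.eraseIdx j) := by
  rw [inversionSign_wordProd] at h
  have hmem : t ∈ lis ω := by
    by_contra hnot
    simp [List.count_eq_zero_of_not_mem hnot] at h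
  obtain ⟨j, hj, rfl⟩ := List.getElem_of_mem hmem
  refine ⟨j, by simpa using hj, ?_⟩
  rw [← List.getD_eq_getElem _ 1, getD_leftInvSeq_mul_wordProd]

theorem length_mul_lt_of_inversionSign {w t : W} (h : cs.inversionSign w t = -1) :
    ℓ (t * w) < ℓ w := by
  obtain ⟨ω, hω, rfl⟩ := cs.exists_isReduced w
  obtain ⟨j, hj, heq⟩ := cs.exists_mul_wordProd_eq_wordProd_eraseIdx h
  calc ℓ (t * π ω) ≤ (ω.eraseIdx j).length := heq ▸ cs.length_wordProd_le _
    _ < ℓ (π ω) := by rw [List.length_eraseIdx_of_lt hj, hω.eq]; omega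

theorem inversionSign_simple_of_length_simple_mul_lt {w : W} {i : B} (h : ℓ (s i * w) < ℓ w) :
    cs.inversionSign w (s i) = -1 := by
  rcases Int.units_eq_one_or (cs.inversionSign w (s i)) with h1 | h1
  · have hflip : cs.inversionSign (s i * w) (s i) = -1 := by
      rw [inversionSign_mul, inv_simple, simple_mul_simple_cancel_right, h1,
        inversionSign_simple_simple, one_mul]
    have := cs.length_mul_lt_of_inversionSign hflip
    rw [simple_mul_simple_cancel_left] at this
    omega
  · exact h1

/-- The exchange condition, for words that need not be reduced. -/
theorem exists_simple_mul_wordProd_eq_wordProd_eraseIdx {ω : List B} {i : B}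
    (h : ℓ (s i * π ω) < ℓ (π ω)) : ∃ j < ω.length, s i * π ω = π (ω.eraseIdx j) :=
  cs.exists_mul_wordProd_eq_wordProd_eraseIdx (cs.inversionSign_simple_of_length_simple_mul_lt h)

variable {J : Set B}

theorem wordProd_mem_closure {ω : List B} (h : ∀ x ∈ ω, x ∈ J) :
    π ω ∈ Subgroup.closure (cs.simple '' J) := by
  rw [wordProd]
  refine Subgroup.list_prod_mem _ fun x hx => ?_
  obtain ⟨i, hi, rfl⟩ := List.mem_map.mp hx
  exact Subgroup.subset_closure ⟨i, h i hi, rfl⟩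

theorem exists_wordProd_eq_of_mem_closure {w : W} (h : w ∈ Subgroup.closure (cs.simple '' J)) :
    ∃ ω : List B, (∀ x ∈ ω, x ∈ J) ∧ π ω = w := by
  induction h using Subgroup.closure_induction with
  | mem x hx =>
    obtain ⟨i, hi, rfl⟩ := hx
    exact ⟨[i], by simpa using hi, cs.wordProd_singleton i⟩
  | one => exact ⟨[], by simp, cs.wordProd_nil⟩
  | mul x y _ _ ihx ihy =>
    obtain ⟨ω₁, h₁, rfl⟩ := ihx
    obtain ⟨ω₂, h₂, rfl⟩ := ihy
    exact ⟨ω₁ ++ ω₂, by simpa using fun x hx => hx.elim (h₁ x) (h₂ x), cs.wordProd_append _ _⟩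
  | inv x _ ihx =>
    obtain ⟨ω, hω, rfl⟩ := ihx
    exact ⟨ω.reverse, by simpa using hω, cs.wordProd_reverse ω⟩

theorem exists_isReduced_of_forall_mem (ω : List B) (h : ∀ x ∈ ω, x ∈ J) :
    ∃ ψ : List B, cs.IsReduced ψ ∧ (∀ x ∈ ψ, x ∈ J) ∧ π ψ = π ω := by
  induction ω with
  | nil => exact ⟨[], by simp [IsReduced], by simp, rfl⟩
  | cons a ω ih =>
    obtain ⟨ψ, hψ, hψJ, hψω⟩ := ih fun x hx => h x (List.mem_cons_of_mem a hx)
    rw [wordProd_cons, ← hψω]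
    rcases cs.length_simple_mul (π ψ) a with hup | hdown
    · refine ⟨a :: ψ, ?_, ?_, wordProd_cons _ _ _⟩
      · rw [IsReduced, wordProd_cons, hup, hψ.eq, List.length_cons]
      · simpa using ⟨h a List.mem_cons_self, hψJ⟩
    · obtain ⟨j, hj, heq⟩ :=
        cs.exists_simple_mul_wordProd_eq_wordProd_eraseIdx (ω := ψ) (i := a) (by omega)
      refine ⟨ψ.eraseIdx j, ?_, fun x hx => hψJ x ((List.eraseIdx_sublist ψ j).subset hx),
        heq.symm⟩
      rw [IsReduced, ← heq, List.length_eraseIdx_of_lt hj, ← hψ.eq]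
      omega

theorem exists_isReduced_of_mem_closure {w : W} (h : w ∈ Subgroup.closure (cs.simple '' J)) :
    ∃ ψ : List B, cs.IsReduced ψ ∧ (∀ x ∈ ψ, x ∈ J) ∧ π ψ = w := by
  obtain ⟨ω, hω, rfl⟩ := cs.exists_wordProd_eq_of_mem_closure h
  exact cs.exists_isReduced_of_forall_mem ω hω

theorem mem_of_simple_mem_closure (hinj : Function.Injective cs.simple) {i : B}
    (h : s i ∈ Subgroup.closure (cs.simple '' J)) : i ∈ J := by
  obtain ⟨ψ, hψ, hψJ, hψi⟩ := cs.exists_isReduced_of_mem_closure h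
  have hlen : ψ.length = 1 := by rw [← hψ.eq, hψi, length_simple]
  obtain ⟨a, rfl⟩ := List.length_eq_one_iff.mp hlen
  rw [wordProd_singleton] at hψi
  exact hinj hψi ▸ hψJ a List.mem_cons_self

theorem forall_mem_of_isReduced_of_wordProd_mem_closure (hinj : Function.Injective cs.simple)
    {ω : List B} (hω : cs.IsReduced ω) (h : π ω ∈ Subgroup.closure (cs.simple '' J)) :
    ∀ x ∈ ω, x ∈ J := by
  induction ω with
  | nil => simp
  | cons a ω ih =>
    have hωred : cs.IsReduced ω := by simpa using hω.drop 1
    have hdesc : ℓ (s a * π (a :: ω)) < ℓ (π (a :: ω)) := by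
      rw [hω.eq, wordProd_cons, simple_mul_simple_cancel_left, hωred.eq, List.length_cons]
      omega
    obtain ⟨ψ, hψJ, hψ⟩ := cs.exists_wordProd_eq_of_mem_closure h
    rw [← hψ] at hdesc
    obtain ⟨j, -, heq⟩ := cs.exists_simple_mul_wordProd_eq_wordProd_eraseIdx hdesc
    have htail : π ω ∈ Subgroup.closure (cs.simple '' J) := by
      rw [← simple_mul_simple_cancel_left cs a (w := π ω), ← wordProd_cons, ← hψ, heq]
      exact cs.wordProd_mem_closure fun x hx => hψJ x ((List.eraseIdx_sublist ψ j).subset hx)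
    have ha : s a ∈ Subgroup.closure (cs.simple '' J) := by
      simpa [wordProd_cons] using mul_mem h (inv_mem htail)
    simpa [cs.mem_of_simple_mem_closure hinj ha] using ih hωred htail

end CoxeterSystem

theorem List.rotate_eq_getElem_cons_tail {α : Type*} {l : List α} {k : ℕ} (hk : k < l.length) :
    l.rotate k = l[k] :: (l.rotate k).tail := by
  rw [List.rotate_eq_drop_append_take hk.le, List.drop_eq_getElem_cons hk]
  rfl

theorem List.mem_tail_rotate {α : Type*} {l : List α} {k : ℕ} (hk : k < l.length) {x : α}
    (hx : x ∈ l) (hne : x ≠ l[k]) : x ∈ (l.rotate k).tail := by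
  rw [← List.mem_rotate (n := k), List.rotate_eq_getElem_cons_tail hk] at hx
  exact (List.mem_cons.mp hx).resolve_left hne

theorem List.rotate_set_succ {α : Type*} {l : List α} {k : ℕ} (hk : k < l.length) (y : α) :
    (l.set k y).rotate (k + 1) = (l.rotate k).tail ++ [y] := by
  rw [List.rotate_eq_drop_append_take (by simpa using hk), List.rotate_eq_drop_append_take hk.le,
    List.drop_eq_getElem_cons hk, List.take_add_one]
  simp [List.drop_set, List.take_set, hk, -List.getElem_cons_drop, List.set_eq_of_length_le]

section CoxeterComplex

open Pointwise

variable {B W : Type*} [Group W] {M : CoxeterMatrix B} (cs : CoxeterSystem M W)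

theorem coxVertex_eq_smul (w : W) (i : B) : coxVertex cs w i = w • (coxParab cs i : Set W) := rfl

theorem mem_coxVertex_iff {w v : W} {i : B} : v ∈ coxVertex cs w i ↔ w⁻¹ * v ∈ coxParab cs i := by
  rw [coxVertex_eq_smul, mem_leftCoset_iff, SetLike.mem_coe]

theorem coxVertex_mul_of_mem {w u : W} {i : B} (h : u ∈ coxParab cs i) :
    coxVertex cs (w * u) i = coxVertex cs w i := by
  rw [coxVertex_eq_smul, coxVertex_eq_smul, leftCoset_eq_iff]
  simpa using inv_mem h

theorem simple_mem_coxParab {i j : B} (h : j ≠ i) : cs.simple j ∈ coxParab cs i :=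
  Subgroup.subset_closure ⟨j, h, rfl⟩

theorem injective_simple_of_injective_coxVertex {w : W} (h : Function.Injective (coxVertex cs w)) :
    Function.Injective cs.simple := by
  by_contra hnot
  obtain ⟨a, b, hab, hne⟩ := Function.not_injective_iff.mp hnot
  have htop : ∀ {a b : B}, cs.simple a = cs.simple b → a ≠ b → coxParab cs a = ⊤ := by
    intro a b hab hne
    rw [eq_top_iff, ← cs.subgroup_closure_range_simple, Subgroup.closure_le]
    rintro _ ⟨j, rfl⟩
    obtain rfl | hj := eq_or_ne j a
    · exact hab ▸ simple_mem_coxParab cs hne.symm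
    · exact simple_mem_coxParab cs hj
  exact hne (h (by rw [coxVertex, coxVertex, htop hab hne, htop hab.symm hne.symm]))

theorem eq_one_or_eq_simple_of_forall_mem_coxParab (hinj : Function.Injective cs.simple) {i : B}
    {u : W} (h : ∀ j ≠ i, u ∈ coxParab cs j) : u = 1 ∨ u = cs.simple i := by
  obtain ⟨ω, hω, rfl⟩ := cs.exists_isReduced u
  have hωi : ∀ x ∈ ω, x = i := fun x hx => by
    by_contra hxi
    exact cs.forall_mem_of_isReduced_of_wordProd_mem_closure hinj hω (h x hxi) x hx rfl
  match ω, hω, hωi with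
  | [], _, _ => exact Or.inl cs.wordProd_nil
  | [a], _, hωi => exact Or.inr (by rw [cs.wordProd_singleton, hωi a List.mem_cons_self])
  | a :: b :: ω, hω, hωi =>
    have hlen := hω.eq
    rw [cs.wordProd_cons, cs.wordProd_cons, hωi a (by simp), hωi b (by simp),
      cs.simple_mul_simple_cancel_left, List.length_cons, List.length_cons] at hlen
    have := cs.length_wordProd_le ω
    omega

/-- Thinness of `Σ(W,S)`: the panel of cotype `i` of the chamber `w` lies only in the chambers
`w` and `w sᵢ`. -/
theorem eq_coxVertex_mul_simple_of_mem_face (hinj : Function.Injective cs.simple)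
    {X : Finset (Set W)} (hX : coxFaces cs X) {w : W} {i : B}
    (hw : ∀ j ≠ i, coxVertex cs w j ∈ X) {y : Set W} (hy : y ∈ X)
    (hyw : ∀ j, y ≠ coxVertex cs w j) : y = coxVertex cs (w * cs.simple i) i := by
  obtain ⟨v, I, rfl⟩ := hX
  have hv : ∀ j ≠ i, w⁻¹ * v ∈ coxParab cs j := fun j hj => by
    obtain ⟨j', -, hj'⟩ := Finset.mem_image.mp (hw j hj)
    rw [← mem_coxVertex_iff, ← hj', mem_coxVertex_iff, inv_mul_cancel]
    exact one_mem _
  obtain ⟨j₀, -, rfl⟩ := Finset.mem_image.mp hy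
  obtain hvw | hvw := eq_one_or_eq_simple_of_forall_mem_coxParab cs hinj hv
  · exact absurd (by rw [inv_mul_eq_one.mp hvw]) (hyw j₀)
  · rw [← hvw, mul_inv_cancel_left]
    obtain rfl | hj₀ := eq_or_ne j₀ i
    · rfl
    · refine absurd ?_ (hyw j₀)
      rw [← mul_inv_cancel_left w v, hvw,
        coxVertex_mul_of_mem cs (simple_mem_coxParab cs hj₀.symm)]

end CoxeterComplex

theorem ofFn_coxVertex_mul_simple {n : ℕ} {W : Type*} [Group W] {M : CoxeterMatrix (Fin n)}
    (cs : CoxeterSystem M W) (δ : Equiv.Perm (Fin n)) (w : W) (k : Fin n) :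
    (List.ofFn fun j => coxVertex cs (w * cs.simple (δ k)) (δ j)) =
      (List.ofFn fun j => coxVertex cs w (δ j)).set k
        (coxVertex cs (w * cs.simple (δ k)) (δ k)) := by
  refine List.ext_getElem (by simp) fun m hm _ => ?_
  rw [List.getElem_set]
  split_ifs with hkm
  · simp [← hkm]
  · have hne : δ k ≠ δ ⟨m, by simpa using hm⟩ := fun h =>
      hkm (by simpa using congrArg Fin.val (δ.injective h))
    simp [coxVertex_mul_of_mem cs (simple_mem_coxParab cs hne)]

theorem tStep_rotate_ofFn_coxVertex {n : ℕ} {W : Type*} [Group W] {M : CoxeterMatrix (Fin n)}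
    (cs : CoxeterSystem M W) (δ : Equiv.Perm (Fin n)) (w : W) {k : ℕ} (hk : k < n)
    {G : List (Set W)}
    (h : TStep n (coxFaces cs) ((List.ofFn fun j => coxVertex cs w (δ j)).rotate k) G) :
    G = (List.ofFn fun j => coxVertex cs (w * cs.simple (δ ⟨k, hk⟩)) (δ j)).rotate (k + 1) := by
  set F := List.ofFn fun j => coxVertex cs w (δ j)
  obtain ⟨⟨-, hFnd, -⟩, ⟨-, hGnd, hGface⟩, y, rfl, hy⟩ := h
  have hkF : k < F.length := by simpa [F] using hk
  have hFinj : Function.Injective fun j => coxVertex cs w (δ j) :=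
    List.nodup_ofFn.mp (List.nodup_rotate.mp hFnd)
  -- `i ↦ sᵢ` is injective in every Coxeter system, but proving that needs the geometric
  -- representation; here it follows because the vertices of a flag are distinct.
  have hinj : Function.Injective cs.simple :=
    injective_simple_of_injective_coxVertex cs ((Equiv.injective_comp δ _).mp hFinj)
  have hrot : F.rotate k = coxVertex cs w (δ ⟨k, hk⟩) :: (F.rotate k).tail := by
    simpa [F] using List.rotate_eq_getElem_cons_tail hkF
  have hmem_tail : ∀ j ≠ δ ⟨k, hk⟩, coxVertex cs w j ∈ (F.rotate k).tail := fun j hj => by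
    refine List.mem_tail_rotate hkF (List.mem_ofFn.mpr ⟨δ.symm j, by simp⟩) fun heq => hj ?_
    have := hFinj (show coxVertex cs w (δ (δ.symm j)) = coxVertex cs w (δ ⟨k, hk⟩) by
      simpa [F] using heq)
    rw [← this, Equiv.apply_symm_apply]
  have hy_tail : y ∉ (F.rotate k).tail := fun hyt =>
    List.disjoint_of_nodup_append hGnd hyt List.mem_cons_self
  have hy_eq : y = coxVertex cs (w * cs.simple (δ ⟨k, hk⟩)) (δ ⟨k, hk⟩) := by
    refine eq_coxVertex_mul_simple_of_mem_face cs hinj hGface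
      (fun j hj => List.mem_toFinset.mpr (List.mem_append_left _ (hmem_tail j hj)))
      (List.mem_toFinset.mpr (List.mem_append_right _ List.mem_cons_self)) fun j hyj => ?_
    obtain rfl | hj := eq_or_ne j (δ ⟨k, hk⟩)
    · exact hy (by rw [hrot, hyj]; rfl)
    · exact hy_tail (hyj ▸ hmem_tail j hj)
  rw [ofFn_coxVertex_mul_simple, ← List.rotate_set_succ hkF, hy_eq]

theorem stmt11_general {n : ℕ} {W : Type*} [Group W] {M : CoxeterMatrix (Fin n)}
    (cs : CoxeterSystem M W) (δ : Equiv.Perm (Fin n)) (c : ℕ → List (Set W))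
    (hc0 : c 0 = List.ofFn fun i : Fin n => coxVertex cs 1 (δ i))
    (hstep : ∀ i : ℕ, i < n → TStep n (coxFaces cs) (c i) (c (i + 1))) :
    c n = List.ofFn fun i : Fin n =>
      coxVertex cs ((List.ofFn fun j : Fin n => cs.simple (δ j)).prod) (δ i) := by
  set word := List.ofFn δ
  have hc : ∀ k ≤ n,
      c k = (List.ofFn fun i => coxVertex cs (cs.wordProd (word.take k)) (δ i)).rotate k := by
    intro k hk
    induction k with
    | zero => simp [hc0]
    | succ k ih =>
      have hstep' := hstep k hk
      rw [ih (by omega)] at hstep'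
      rw [tStep_rotate_ofFn_coxVertex cs δ _ hk hstep', List.take_add_one, cs.wordProd_append]
      simp [word, Nat.lt_of_succ_le hk]
  rw [hc n le_rfl, List.take_of_length_le (by simp [word]),
    List.rotate_eq_drop_append_take (by simp),
    List.drop_of_length_le (by simp), List.take_of_length_le (by simp), List.nil_append,
    CoxeterSystem.wordProd, List.map_ofFn]
  rfl

/-- In the Coxeter complex of a finite Coxeter system `(W,S)`, `|S| = n`, for any
permutation `δ` of `{1,…,n}` with Coxeter element `s_δ = s_{δ(1)} ⋯ s_{δ(n)}`, the flag `E_δ`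
with vertex sequence `W^{δ(1)}, …, W^{δ(n)}` satisfies `T^n(E_δ) = L_{s_δ}(E_δ)`. -/
theorem stmt11 {n : ℕ} {W : Type*} [Group W] [Fintype W] {M : CoxeterMatrix (Fin n)}
    (cs : CoxeterSystem M W) (δ : Equiv.Perm (Fin n)) (c : ℕ → List (Set W))
    (hc0 : c 0 = List.ofFn fun i : Fin n => coxVertex cs 1 (δ i))
    (hstep : ∀ i : ℕ, i < n → TStep n (coxFaces cs) (c i) (c (i + 1))) :
    c n = List.ofFn fun i : Fin n =>
      coxVertex cs ((List.ofFn fun j : Fin n => cs.simple (δ j)).prod) (δ i) :=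
  stmt11_general cs δ c hc0 hstep
end

section
/- Let Δ be a thin pure simplicial complex of rank n and δ a permutation of {0,...,n-1}. For a flag F of Δ with i-face X_i, consider the zigzag Z in the flag complex 𝔉(Δ) defined by the vertex sequence X_{δ(0)}, X_{δ(1)}, ..., X_{δ(n-1)}. Then the 0-shadow of Z is the sequence Y_{kn+i} (k ∈ ℕ, 0 ≤ i ≤ n-1) where Y_{kn+i} is the δ(i)-face of the flag T_δ^k applied to F composed with the partial products σ_{δ(i)}∘...∘σ_{δ(0)}; consequently the length of Z equals n·l, where l is the length of the δ-zigzag {T_δ^k(F)} with T_δ = σ_{δ(n-1)}∘...∘σ_{δ(0)}. -/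
open scoped Classical

variable {V : Type*}

/-- Faces of the flag complex `𝔉(Δ)`: sets of nonempty faces of `Δ` that form a chain. -/
def flagCplxFaces (faces : Finset V → Prop) (S : Finset (Finset V)) : Prop :=
  (∀ X ∈ S, faces X ∧ X.Nonempty) ∧ ∀ X ∈ S, ∀ Y ∈ S, X ⊆ Y ∨ Y ⊆ X

/-!
A flag of `𝔉(Δ)` is the list of the faces of a flag `F` of `Δ` in some order `ε`, and the
operator `T` of `𝔉(Δ)` drops the first face `X_{ε(0)}` and appends the other face completing
the remaining chain. Hence `T` sends `(F, ε)` to `(σ_{ε(0)} F, ε ∘ rotation)`: starting from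
`(F, δ)`, `n` steps of `T` perform `σ_{δ(0)}, …, σ_{δ(n-1)}`, i.e. one step of `T_δ`, and
restore the order `δ`. The step `σ_j` is well defined: below the top rank the `j`-face lies
strictly between two faces whose sizes differ by two, in the top rank thinness leaves two facets
through a ridge. The head of the `(k n + i)`-th flag of `Z` is the `δ(i)`-face of
`σ_{δ(i-1)} ⋯ σ_{δ(0)} T_δ^k F`, which none of these `σ`'s has changed. Comparing the sizes of
the heads, every period of `Z` is a multiple of `n`, and comparing the flags at multiples of
`n`, the periods of `Z` are exactly `n` times those of the `δ`-zigzag.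
-/

noncomputable def flagFace (F : List V) (j : ℕ) : Finset V := (F.take (j + 1)).toFinset

theorem toFinset_take_mono (F : List V) {i j : ℕ} (hij : i ≤ j) :
    (F.take i).toFinset ⊆ (F.take j).toFinset := fun _ hx => by
  simpa using List.take_subset_take_left F hij (List.mem_toFinset.mp hx)

theorem card_toFinset_take {F : List V} (hF : F.Nodup) {j : ℕ} (hj : j ≤ F.length) :
    (F.take j).toFinset.card = j := by
  rw [List.toFinset_card_of_nodup (hF.sublist (List.take_sublist j F)), List.length_take,
    min_eq_left hj]

theorem card_flagFace {F : List V} (hF : F.Nodup) {j : ℕ} (hj : j < F.length) :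
    (flagFace F j).card = j + 1 :=
  card_toFinset_take hF hj

theorem flagFace_eq_insert (F : List V) {j : ℕ} (hj : j < F.length) :
    flagFace F j = insert F[j] (F.take j).toFinset := by
  rw [flagFace, ← List.take_concat_get' F j hj, List.toFinset_append, Finset.insert_eq,
    Finset.union_comm]
  rfl

theorem getElem_notMem_toFinset_take {F : List V} (hF : F.Nodup) {j : ℕ} (hj : j < F.length) :
    F[j] ∉ (F.take j).toFinset := by
  have hnodup := hF.sublist (List.take_sublist (j + 1) F)
  rw [← List.take_concat_get' F j hj, List.nodup_append] at hnodup
  exact fun h => hnodup.2.2 _ (List.mem_toFinset.mp h) _ (List.mem_singleton_self _) rfl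

theorem eq_of_flagFace_eq {F G : List V} (hF : F.Nodup)
    (hlen : F.length = G.length) (h : ∀ j < F.length, flagFace F j = flagFace G j) : F = G := by
  refine List.ext_getElem hlen fun j hjF hjG => ?_
  have hprefix : (F.take j).toFinset = (G.take j).toFinset := by
    cases j with
    | zero => simp
    | succ i => exact h i (by omega)
  have hmem : F[j] ∈ insert G[j] (G.take j).toFinset := by
    rw [← flagFace_eq_insert G hjG, ← h j hjF, flagFace_eq_insert F hjF]
    exact Finset.mem_insert_self _ _
  rcases Finset.mem_insert.mp hmem with heq | hmem'
  · exact heq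
  · exact absurd (hprefix ▸ hmem') (getElem_notMem_toFinset_take hF hjF)

theorem eq_of_map_flagFace_eq {n : ℕ} {js : List ℕ} (hjs : ∀ j < n, j ∈ js) {F F' : List V}
    (hF : F.Nodup) (hlen : F.length = n) (hlen' : F'.length = n)
    (h : js.map (flagFace F) = js.map (flagFace F')) : F = F' :=
  eq_of_flagFace_eq hF (hlen.trans hlen'.symm) fun j hj =>
    List.map_inj_left.mp h j (hjs j (hlen ▸ hj))

theorem toFinset_take_subset (F : List V) (j : ℕ) : (F.take j).toFinset ⊆ F.toFinset :=
  fun _ hx => by simpa using List.take_subset _ F (List.mem_toFinset.mp hx)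

theorem flagFace_eq_toFinset {F : List V} {j : ℕ} (hj : F.length ≤ j + 1) :
    flagFace F j = F.toFinset := by
  rw [flagFace, List.take_of_length_le hj]

theorem Finset.eq_erase_of_subset_of_ne_insert {α : Type*} {A X B : Finset α} {v : α}
    (hAX : A ⊆ X) (hXB : X ⊆ B) (hvB : v ∈ B) (hvA : v ∉ A) (hX : X ≠ insert v A)
    (hXcard : X.card = A.card + 1) (hBcard : B.card = A.card + 2) : X = B.erase v := by
  have hvX : v ∉ X := fun hv => hX (Finset.eq_of_subset_of_card_le (Finset.insert_subset hv hAX)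
    (by rw [Finset.card_insert_of_notMem hvA, hXcard])).symm
  refine Finset.eq_of_subset_of_card_le (Finset.subset_erase.mpr ⟨hXB, hvX⟩) ?_
  rw [Finset.card_erase_of_mem hvB, hBcard, hXcard]
  omega

theorem Set.eq_of_ne_of_ncard_eq_two {α : Type*} {s : Set α} (hs : s.ncard = 2) {a x y : α}
    (ha : a ∈ s) (hx : x ∈ s) (hy : y ∈ s) (hxa : x ≠ a) (hya : y ≠ a) : x = y := by
  obtain ⟨b, c, -, rfl⟩ := Set.ncard_eq_two.mp hs
  simp only [Set.mem_insert_iff, Set.mem_singleton_iff] at ha hx hy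
  grind

section SigmaStep

variable {n : ℕ} {faces : Finset V → Prop} {j : ℕ} {F G G' : List V}

theorem SigmaStep.toFinset_take_eq (h : SigmaStep n faces j F G) (hj : j < n) :
    (G.take j).toFinset = (F.take j).toFinset := by
  cases j with
  | zero => simp
  | succ i => exact h.2.2.1 i (by omega) (by omega)

/-- Below the top rank, the `j`-face of `σ_j(F)` is forced: it lies strictly between the `(j-1)`-
and `(j+1)`-faces of `F`, which leaves two choices, one of them the `j`-face of `F`. -/
theorem SigmaStep.flagFace_eq_of_succ_lt (hG : SigmaStep n faces j F G)
    (hG' : SigmaStep n faces j F G') (hj : j + 1 < n) : flagFace G j = flagFace G' j := by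
  obtain ⟨hFlen, hFnodup, -⟩ := hG.1
  have hjF : j < F.length := by omega
  have hforced : ∀ H, SigmaStep n faces j F H →
      flagFace H j = (flagFace F (j + 1)).erase F[j] := by
    intro H hH
    have hprefix := hH.toFinset_take_eq (by omega)
    obtain ⟨-, ⟨hHlen, hHnodup, -⟩, hsame, hdiff⟩ := hH
    refine Finset.eq_erase_of_subset_of_ne_insert (A := (F.take j).toFinset) ?_ ?_ ?_
      (getElem_notMem_toFinset_take hFnodup hjF) ?_ ?_ ?_
    · exact hprefix ▸ toFinset_take_mono H (Nat.le_succ j)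
    · exact (toFinset_take_mono H (Nat.le_succ _)).trans (hsame (j + 1) hj (by omega)).subset
    · refine toFinset_take_mono F (Nat.le_succ _) ?_
      rw [← flagFace, flagFace_eq_insert F hjF]
      exact Finset.mem_insert_self _ _
    · exact flagFace_eq_insert F hjF ▸ hdiff
    · rw [card_flagFace hHnodup (by omega), card_toFinset_take hFnodup hjF.le]
    · rw [card_flagFace hFnodup (by omega), card_toFinset_take hFnodup hjF.le]
  rw [hforced G hG, hforced G' hG']

/-- In the top rank, thinness leaves exactly two facets through the ridge spanned by the first
`n - 1` vertices of `F`. -/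
theorem SigmaStep.flagFace_eq_of_succ_eq (hΔ : IsThinComplex n faces)
    (hG : SigmaStep n faces j F G) (hG' : SigmaStep n faces j F G') (hj : j + 1 = n) :
    flagFace G j = flagFace G' j := by
  have hF := hG.1
  have hR : faces (F.take j).toFinset := hΔ.2.1 hF.2.2 (toFinset_take_subset F j)
  have hRcard : (F.take j).toFinset.card = n - 1 := by
    rw [card_toFinset_take hF.2.1 (by rw [hF.1]; omega)]
    omega
  have hmem : ∀ H, IsFlag n faces H → (H.take j).toFinset = (F.take j).toFinset →
      flagFace H j ∈ {C | IsFacet n faces C ∧ (F.take j).toFinset ⊆ C} := by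
    rintro H ⟨hlen, hnodup, hface⟩ hprefix
    rw [flagFace_eq_toFinset (by omega)]
    refine ⟨⟨hface, ?_⟩, hprefix ▸ toFinset_take_subset H j⟩
    rw [List.toFinset_card_of_nodup hnodup, hlen]
  exact Set.eq_of_ne_of_ncard_eq_two (hΔ.2.2.2.2 hR hRcard) (hmem F hF rfl)
    (hmem G hG.2.1 (hG.toFinset_take_eq (by omega)))
    (hmem G' hG'.2.1 (hG'.toFinset_take_eq (by omega))) hG.2.2.2 hG'.2.2.2

theorem SigmaStep.unique (hΔ : IsThinComplex n faces) (hj : j < n) (hG : SigmaStep n faces j F G)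
    (hG' : SigmaStep n faces j F G') : G = G' := by
  obtain ⟨hGlen, hGnodup, -⟩ := hG.2.1
  obtain ⟨hG'len, -, -⟩ := hG'.2.1
  refine eq_of_flagFace_eq hGnodup (hGlen.trans hG'len.symm) fun k hk => ?_
  rcases eq_or_ne k j with rfl | hkj
  · rcases Nat.lt_or_ge (k + 1) n with hlt | hge
    · exact hG.flagFace_eq_of_succ_lt hG' hlt
    · exact hG.flagFace_eq_of_succ_eq hΔ hG' (by omega)
  · exact (hG.2.2.1 k (by omega) hkj).trans (hG'.2.2.1 k (by omega) hkj).symm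

end SigmaStep

theorem exists_list_toFinset_take_eq (D : ℕ → Finset V) (n : ℕ)
    (hcard : ∀ k ≤ n, (D k).card = k) (hmono : ∀ k < n, D k ⊆ D (k + 1)) :
    ∃ F : List V, F.length = n ∧ F.Nodup ∧ ∀ k ≤ n, (F.take k).toFinset = D k := by
  induction n with
  | zero =>
    refine ⟨[], rfl, List.nodup_nil, fun k hk => ?_⟩
    obtain rfl : k = 0 := by omega
    exact (Finset.card_eq_zero.mp (hcard 0 le_rfl)).symm
  | succ n ih =>
    obtain ⟨F, hlen, hnodup, hF⟩ := ih (fun k hk => hcard k (by omega))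
      (fun k hk => hmono k (by omega))
    obtain ⟨v, hv⟩ : ∃ v, D (n + 1) \ D n = {v} := by
      rw [← Finset.card_eq_one, Finset.card_sdiff_of_subset (hmono n (by omega)),
        hcard n (by omega), hcard (n + 1) le_rfl]
      omega
    have hvD : v ∉ D n := (Finset.mem_sdiff.mp (hv ▸ Finset.mem_singleton_self v)).2
    have hFD : F.toFinset = D n := by rw [← hF n le_rfl, ← hlen, List.take_length]
    refine ⟨F ++ [v], by simp [hlen], ?_, fun k hk => ?_⟩
    · exact List.nodup_append.mpr ⟨hnodup, List.nodup_singleton v, fun a ha b hb hab => hvD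
        (by rw [← hFD, List.mem_toFinset, ← List.mem_singleton.mp hb, ← hab]; exact ha)⟩
    · rcases Nat.lt_or_ge k (n + 1) with hlt | hge
      · rw [List.take_append_of_le_length (by omega), hF k (by omega)]
      · obtain rfl : k = n + 1 := by omega
        rw [← Finset.sdiff_union_of_subset (hmono n (by omega)), hv, ← hFD,
          List.take_of_length_le (by simp [hlen]), List.toFinset_append, Finset.union_comm]
        rfl

theorem IsFlag.eq_of_card_eq {n : ℕ} {faces : Finset V → Prop} {S : List (Finset V)}
    (hS : IsFlag n (flagCplxFaces faces) S) {X Y : Finset V} (hX : X ∈ S) (hY : Y ∈ S)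
    (hXY : X.card = Y.card) : X = Y := by
  have hchain := hS.2.2.2
  simp only [List.mem_toFinset] at hchain
  rcases hchain X hX Y hY with h | h
  · exact Finset.eq_of_subset_of_card_le h hXY.ge
  · exact (Finset.eq_of_subset_of_card_le h hXY.le).symm

/-- The `n` members of `S` have distinct sizes in `[1, n]`, so every size occurs. -/
theorem IsFlag.exists_mem_card_eq {n : ℕ} {faces : Finset V → Prop}
    (hcard : ∀ X, faces X → X.card ≤ n) {S : List (Finset V)}
    (hS : IsFlag n (flagCplxFaces faces) S) {k : ℕ} (hk1 : 1 ≤ k) (hkn : k ≤ n) :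
    ∃ X ∈ S, X.card = k := by
  have hfaces := hS.2.2.1
  simp only [List.mem_toFinset] at hfaces
  obtain ⟨X, hX, rfl⟩ := Finset.surj_on_of_inj_on_of_card_le (s := S.toFinset)
    (t := Finset.Icc 1 n) (fun X _ => X.card)
    (fun X hX => have hX := List.mem_toFinset.mp hX
      Finset.mem_Icc.mpr ⟨(hfaces X hX).2.card_pos, hcard X (hfaces X hX).1⟩)
    (fun X Y hX hY => hS.eq_of_card_eq (List.mem_toFinset.mp hX) (List.mem_toFinset.mp hY))
    (by rw [List.toFinset_card_of_nodup hS.2.1, hS.1, Nat.card_Icc]; omega) k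
    (Finset.mem_Icc.mpr ⟨hk1, hkn⟩)
  exact ⟨X, List.mem_toFinset.mp hX, rfl⟩

theorem exists_flag_of_isFlag_flagCplxFaces {n : ℕ} {faces : Finset V → Prop} (hn : 0 < n)
    (hcard : ∀ X, faces X → X.card ≤ n) {S : List (Finset V)}
    (hS : IsFlag n (flagCplxFaces faces) S) :
    ∃ F, IsFlag n faces F ∧ ∀ X, X ∈ S ↔ ∃ j < n, X = flagFace F j := by
  have hfaces := hS.2.2.1
  have hchain := hS.2.2.2
  simp only [List.mem_toFinset] at hfaces hchain
  let D : ℕ → Finset V := fun k => if h : ∃ X ∈ S, X.card = k then h.choose else ∅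
  have hD : ∀ k, 1 ≤ k → k ≤ n → D k ∈ S ∧ (D k).card = k := fun k hk1 hkn => by
    have h := hS.exists_mem_card_eq hcard hk1 hkn
    simpa only [D, dif_pos h] using h.choose_spec
  have hD0 : D 0 = ∅ := dif_neg fun ⟨X, hX, hX0⟩ =>
    (hfaces X hX).2.ne_empty (Finset.card_eq_zero.mp hX0)
  obtain ⟨F, hFlen, hFnodup, hF⟩ := exists_list_toFinset_take_eq D n
    (fun k hk => by
      rcases Nat.eq_zero_or_pos k with rfl | hk0
      · rw [hD0, Finset.card_empty]
      · exact (hD k hk0 hk).2)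
    (fun k hk => by
      rcases Nat.eq_zero_or_pos k with rfl | hk0
      · exact hD0 ▸ Finset.empty_subset _
      · obtain ⟨hmem, hkcard⟩ := hD k hk0 hk.le
        obtain ⟨hmem', hk'card⟩ := hD (k + 1) (by omega) hk
        refine (hchain _ hmem _ hmem').resolve_right fun h => ?_
        have := Finset.card_le_card h
        omega)
  have hface : ∀ j < n, flagFace F j = D (j + 1) := fun j hj => hF (j + 1) hj
  refine ⟨F, ⟨hFlen, hFnodup, ?_⟩, fun X => ⟨fun hX => ?_, ?_⟩⟩
  · rw [← List.take_length (l := F), hF _ hFlen.le, hFlen]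
    exact (hfaces _ (hD n hn le_rfl).1).1
  · have hpos := (hfaces X hX).2.card_pos
    have hle := hcard X (hfaces X hX).1
    refine ⟨X.card - 1, by omega, ?_⟩
    rw [hface _ (by omega), Nat.sub_add_cancel hpos]
    have := hD X.card hpos hle
    exact hS.eq_of_card_eq hX this.1 this.2.symm
  · rintro ⟨j, hj, rfl⟩
    rw [hface j hj]
    exact (hD (j + 1) (by omega) hj).1

theorem TStep.rank_pos {n : ℕ} {faces : Finset V → Prop} {F G : List V}
    (h : TStep n faces F G) : 0 < n := by
  obtain ⟨⟨hF, -⟩, ⟨hG, -⟩, y, rfl, -⟩ := h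
  simp only [List.length_append, List.length_tail, List.length_singleton] at hG
  omega

theorem TStep.exists_sigmaStep {n : ℕ} {faces : Finset V → Prop}
    (hcard : ∀ X, faces X → X.card ≤ n) {F : List V} (hF : IsFlag n faces F) {j₀ : ℕ}
    {js : List ℕ} (hjs : (j₀ :: js).Perm (List.range n)) {S : List (Finset V)}
    (hT : TStep n (flagCplxFaces faces) ((j₀ :: js).map (flagFace F)) S) :
    ∃ F', SigmaStep n faces j₀ F F' ∧ S = (js ++ [j₀]).map (flagFace F') := by
  obtain ⟨-, hS, y, rfl, hy⟩ := hT
  simp only [List.map_cons, List.tail_cons, List.head?_cons, ne_eq, Option.some.injEq] at hy ⊢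
  have hrange : ∀ j, j ∈ j₀ :: js ↔ j < n := fun j => by rw [hjs.mem_iff, List.mem_range]
  have hj₀ : j₀ < n := (hrange j₀).mp List.mem_cons_self
  obtain ⟨F', hF', hmem⟩ := exists_flag_of_isFlag_flagCplxFaces (by omega) hcard hS
  have hsame : ∀ j ∈ js, flagFace F' j = flagFace F j := by
    intro j hj
    obtain ⟨k, hk, hk_eq⟩ := (hmem (flagFace F j)).mp
      (List.mem_append_left _ (List.mem_map_of_mem hj))
    have hjn : j < n := (hrange j).mp (List.mem_cons_of_mem _ hj)
    have hcards := congrArg Finset.card hk_eq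
    rw [card_flagFace hF.2.1 (by rw [hF.1]; exact hjn),
      card_flagFace hF'.2.1 (by rw [hF'.1]; exact hk)] at hcards
    obtain rfl : j = k := by omega
    exact hk_eq.symm
  have hy_eq : y = flagFace F' j₀ := by
    obtain ⟨k, hk, rfl⟩ := (hmem y).mp (List.mem_append_right _ (List.mem_singleton_self y))
    by_contra hne
    have hkjs : k ∈ js :=
      ((List.mem_cons.mp ((hrange k).mpr hk)).resolve_left fun h => hne (h ▸ rfl))
    exact (List.nodup_append.mp hS.2.1).2.2 _ (List.mem_map_of_mem hkjs) _
      (List.mem_singleton_self _) (hsame k hkjs).symm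
  refine ⟨F', ⟨hF, hF', fun j hj hne => hsame j ?_, ?_⟩, ?_⟩
  · exact (List.mem_cons.mp ((hrange j).mpr hj)).resolve_left hne
  · change flagFace F' j₀ ≠ flagFace F j₀
    exact hy_eq ▸ Ne.symm hy
  · rw [List.map_append, List.map_congr_left hsame, hy_eq]
    rfl

theorem Fin.ofNat_mul_add {n : ℕ} [NeZero n] (k : ℕ) {t : ℕ} (ht : t < n) :
    Fin.ofNat n (k * n + t) = ⟨t, ht⟩ :=
  Fin.ext (by rw [Fin.val_ofNat, Nat.add_comm, Nat.add_mul_mod_self_right, Nat.mod_eq_of_lt ht])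

def permIndices {n : ℕ} (δ : Equiv.Perm (Fin n)) : List ℕ := List.ofFn fun i => (δ i : ℕ)

section PermIndices

variable {n : ℕ} (δ : Equiv.Perm (Fin n))

theorem permIndices_perm_range : (permIndices δ).Perm (List.range n) :=
  (Equiv.Perm.ofFn_comp_perm δ (fun i : Fin n => (i : ℕ))).trans (by simp [List.ofFn_eq_map])

theorem length_permIndices : (permIndices δ).length = n := List.length_ofFn

theorem head?_rotate_permIndices [NeZero n] (x : ℕ) :
    ((permIndices δ).rotate x).head? = some (δ (Fin.ofNat n x) : ℕ) := by
  rw [← List.rotate_mod, List.head?_rotate (by simp [length_permIndices, Nat.mod_lt, NeZero.pos]),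
    permIndices, List.getElem?_ofFn]
  simp [Nat.mod_lt, NeZero.pos, Fin.ofNat]

theorem rotate_permIndices_add_mul (x q : ℕ) :
    (permIndices δ).rotate (x + n * q) = (permIndices δ).rotate x := by
  have h := List.rotate_length_mul (permIndices δ) q
  rw [length_permIndices] at h
  rw [Nat.add_comm, ← List.rotate_rotate, h]

end PermIndices

section Orbit

variable {n : ℕ} {faces : Finset V → Prop}

/-- The flags visited by the partial products `σ_{δ(i)} ∘ ⋯ ∘ σ_{δ(0)} ∘ T_δ^k`, laid out
along a single index `x = k n + i`. -/
theorem exists_sigmaStep_seq [NeZero n] {δ : Equiv.Perm (Fin n)} {Fseq : ℕ → List V}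
    (h : ∀ k, TDeltaStep n faces δ (Fseq k) (Fseq (k + 1))) :
    ∃ Φ : ℕ → List V, (∀ k, Φ (k * n) = Fseq k) ∧
      ∀ x, SigmaStep n faces (δ (Fin.ofNat n x)) (Φ x) (Φ (x + 1)) := by
  choose c hc0 hcn hcs using h
  have hn := NeZero.pos n
  have hc : ∀ q r, r < n → c ((q * n + r) / n) ((q * n + r) % n) = c q r := fun q r hr => by
    have hmod := congrArg Fin.val (Fin.ofNat_mul_add q hr)
    rw [Fin.val_ofNat] at hmod
    rw [hmod, Nat.add_comm, Nat.add_mul_div_right _ _ hn, Nat.div_eq_of_lt hr, zero_add]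
  refine ⟨fun x => c (x / n) (x % n), fun k => by simpa [hc0] using hc k 0 hn, fun x => ?_⟩
  obtain ⟨q, r, hr, rfl⟩ : ∃ q r, r < n ∧ x = q * n + r :=
    ⟨x / n, x % n, Nat.mod_lt x hn, (Nat.div_add_mod' x n).symm⟩
  have hnext : c ((q * n + r + 1) / n) ((q * n + r + 1) % n) = c q (r + 1) := by
    rcases Nat.lt_or_ge (r + 1) n with hlt | hge
    · exact hc q (r + 1) hlt
    · rw [show q * n + r + 1 = (q + 1) * n + 0 by rw [Nat.add_mul, one_mul]; omega,
        hc (q + 1) 0 hn, hc0, ← hcn, show r + 1 = n by omega]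
  simp only [hc q r hr, hnext, Fin.ofNat_mul_add q hr]
  exact hcs q ⟨r, hr⟩

theorem flagFace_eq_of_sigmaStep_ne {d : ℕ → ℕ} {Φ : ℕ → List V}
    (hΦ : ∀ x, SigmaStep n faces (d x) (Φ x) (Φ (x + 1))) {j : ℕ} (hj : j < n) (x : ℕ)
    {m : ℕ} (hd : ∀ t < m, d (x + t) ≠ j) : flagFace (Φ (x + m)) j = flagFace (Φ x) j := by
  induction m with
  | zero => rfl
  | succ m ih =>
    exact ((hΦ (x + m)).2.2.1 j hj (hd m (by omega)).symm).trans (ih fun t ht => hd t (by omega))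

theorem sigmaStep_seq_add_eq_of_eq (hΔ : IsThinComplex n faces) {d : ℕ → ℕ}
    (hdn : ∀ x, d x < n) {Φ : ℕ → List V} (hΦ : ∀ x, SigmaStep n faces (d x) (Φ x) (Φ (x + 1)))
    {p : ℕ} (hdp : ∀ x, d (x + p) = d x) (hp : Φ p = Φ 0) (x : ℕ) : Φ (x + p) = Φ x := by
  induction x with
  | zero => rwa [zero_add]
  | succ x ih =>
    have hstep := hΦ (x + p)
    rw [hdp, ih] at hstep
    rw [Nat.add_right_comm]
    exact hstep.unique hΔ (hdn x) (hΦ x)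

end Orbit

section Zigzag

variable {n : ℕ} [NeZero n] {faces : Finset V → Prop} {δ : Equiv.Perm (Fin n)}
  {Φ : ℕ → List V} {G : ℕ → List (Finset V)}

theorem zigzag_eq_map_rotate (hΔ : IsThinComplex n faces)
    (hΦ : ∀ x, SigmaStep n faces (δ (Fin.ofNat n x)) (Φ x) (Φ (x + 1)))
    (hG : ∀ x, TStep n (flagCplxFaces faces) (G x) (G (x + 1)))
    (hG0 : G 0 = (permIndices δ).map (flagFace (Φ 0))) (x : ℕ) :
    G x = ((permIndices δ).rotate x).map (flagFace (Φ x)) := by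
  induction x with
  | zero => simpa using hG0
  | succ x ih =>
    obtain ⟨rest, hrest⟩ := List.head?_eq_some_iff.mp (head?_rotate_permIndices δ x)
    have hT := hG x
    rw [ih, hrest] at hT
    obtain ⟨F', hσ, hGF'⟩ := hT.exists_sigmaStep hΔ.2.2.1 (hΦ x).1
      (hrest ▸ (List.rotate_perm _ x).trans (permIndices_perm_range δ))
    rw [hGF', hσ.unique hΔ (δ _).isLt (hΦ x), ← List.rotate_rotate, hrest,
      List.rotate_cons_succ, List.rotate_zero]

theorem head?_zigzag (hGΦ : ∀ x, G x = ((permIndices δ).rotate x).map (flagFace (Φ x)))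
    (x : ℕ) : (G x).head? = some (flagFace (Φ x) (δ (Fin.ofNat n x))) := by
  rw [hGΦ, List.head?_map, head?_rotate_permIndices]
  rfl

theorem head?_zigzag_mul_add
    (hΦ : ∀ x, SigmaStep n faces (δ (Fin.ofNat n x)) (Φ x) (Φ (x + 1)))
    (hGΦ : ∀ x, G x = ((permIndices δ).rotate x).map (flagFace (Φ x))) (k : ℕ) (i : Fin n) :
    (G (k * n + i)).head? = some (flagFace (Φ (k * n)) (δ i)) := by
  rw [head?_zigzag hGΦ, Fin.ofNat_mul_add k i.isLt,
    flagFace_eq_of_sigmaStep_ne hΦ (δ _).isLt (k * n) fun t ht => ?_]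
  rw [Fin.ofNat_mul_add k (ht.trans i.isLt), Ne, Fin.val_inj, δ.apply_eq_iff_eq, Fin.ext_iff]
  exact ht.ne

theorem dvd_of_zigzag_eq (hΦ : ∀ x, SigmaStep n faces (δ (Fin.ofNat n x)) (Φ x) (Φ (x + 1)))
    (hGΦ : ∀ x, G x = ((permIndices δ).rotate x).map (flagFace (Φ x))) {p : ℕ}
    (hp : G p = G 0) : n ∣ p := by
  have hheads := head?_zigzag hGΦ p
  rw [hp, head?_zigzag hGΦ 0, Option.some.injEq] at hheads
  have hcards := congrArg Finset.card hheads
  rw [card_flagFace (hΦ 0).1.2.1 (by rw [(hΦ 0).1.1]; exact (δ _).isLt),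
    card_flagFace (hΦ p).1.2.1 (by rw [(hΦ p).1.1]; exact (δ _).isLt), Nat.add_right_cancel_iff,
    Fin.val_inj, δ.apply_eq_iff_eq] at hcards
  have hmod := congrArg Fin.val hcards
  rw [Fin.val_ofNat, Fin.val_ofNat, Nat.zero_mod] at hmod
  exact Nat.dvd_of_mod_eq_zero hmod.symm

theorem zigzag_add_mul_eq (hΔ : IsThinComplex n faces)
    (hΦ : ∀ x, SigmaStep n faces (δ (Fin.ofNat n x)) (Φ x) (Φ (x + 1)))
    (hGΦ : ∀ x, G x = ((permIndices δ).rotate x).map (flagFace (Φ x))) {q : ℕ}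
    (hq : Φ (q * n) = Φ 0) (x : ℕ) : G (x + n * q) = G x := by
  have hΦq := sigmaStep_seq_add_eq_of_eq hΔ (fun _ => (δ _).isLt) hΦ (p := n * q)
    (fun y => by simp [Fin.ofNat]) (by rwa [Nat.mul_comm])
  rw [hGΦ, hGΦ, hΦq, rotate_permIndices_add_mul]

theorem sigmaStep_seq_add_mul_eq_of_zigzag
    (hΦ : ∀ x, SigmaStep n faces (δ (Fin.ofNat n x)) (Φ x) (Φ (x + 1)))
    (hGΦ : ∀ x, G x = ((permIndices δ).rotate x).map (flagFace (Φ x))) {q : ℕ}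
    (hG : ∀ x, G (x + n * q) = G x) (x : ℕ) : Φ (x + n * q) = Φ x := by
  have h := hG x
  rw [hGΦ, hGΦ, rotate_permIndices_add_mul] at h
  exact eq_of_map_flagFace_eq (fun j hj => (List.rotate_perm _ x).mem_iff.mpr
    ((permIndices_perm_range δ).mem_iff.mpr (List.mem_range.mpr hj)))
    (hΦ _).1.2.1 (hΦ _).1.1 (hΦ _).1.1 h

end Zigzag

theorem stmt14_general (n : ℕ) (faces : Finset V → Prop) (hΔ : IsThinComplex n faces)
    (δ : Equiv.Perm (Fin n)) (l : ℕ) (Fseq : ℕ → List V)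
    (hgen : IsGenZigzag n faces δ l Fseq)
    (L : ℕ) (G : ℕ → List (Finset V)) (hG : IsZigzag n (flagCplxFaces faces) L G)
    (hG0 : G 0 = List.ofFn fun i : Fin n => ((Fseq 0).take ((δ i : ℕ) + 1)).toFinset) :
    L = n * l ∧ ∀ (k : ℕ) (i : Fin n),
      (G (k * n + (i : ℕ))).head? = some (((Fseq k).take ((δ i : ℕ) + 1)).toFinset) := by
  obtain ⟨hl, hstep, hper, hmin⟩ := hgen
  obtain ⟨hL, hT, hGper, hLmin⟩ := hG
  have : NeZero n := ⟨(hT 0).rank_pos.ne'⟩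
  obtain ⟨Φ, hΦF, hΦ⟩ := exists_sigmaStep_seq hstep
  have hGΦ := zigzag_eq_map_rotate hΔ hΦ hT (by
    rw [hG0, permIndices, List.map_ofFn, ← hΦF 0, zero_mul]
    rfl)
  refine ⟨le_antisymm ?_ ?_, fun k i => hΦF k ▸ head?_zigzag_mul_add hΦ hGΦ k i⟩
  · refine hLmin (n * l) (Nat.mul_pos (NeZero.pos n) hl) (zigzag_add_mul_eq hΔ hΦ hGΦ ?_)
    rw [hΦF, ← zero_mul n, hΦF]
    simpa using hper 0
  · obtain ⟨q, rfl⟩ := dvd_of_zigzag_eq hΦ hGΦ (by simpa using hGper 0)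
    have hΦq := sigmaStep_seq_add_mul_eq_of_zigzag hΦ hGΦ hGper
    refine Nat.mul_le_mul_left n (hmin q (Nat.pos_of_mul_pos_left hL) fun k => ?_)
    rw [← hΦF, ← hΦF, Nat.add_mul, Nat.mul_comm q n, hΦq]

/-- Let `F` be a flag of `Δ` with `i`-face `X_i` and `δ` a permutation of
`{0,…,n-1}`. The zigzag `Z` of the flag complex `𝔉(Δ)` through the vertex sequence
`X_{δ(0)}, …, X_{δ(n-1)}` has 0-shadow `Y_{kn+i} = ` the `δ(i)`-face of `T_δ^k(F)`, and its
length is `n·l`, where `l` is the length of the `δ`-zigzag `{T_δ^k(F)}` of `Δ`. -/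
theorem stmt14 [Fintype V] (n : ℕ) (faces : Finset V → Prop) (hΔ : IsThinComplex n faces)
    (δ : Equiv.Perm (Fin n)) (l : ℕ) (Fseq : ℕ → List V)
    (hgen : IsGenZigzag n faces δ l Fseq)
    (L : ℕ) (G : ℕ → List (Finset V)) (hG : IsZigzag n (flagCplxFaces faces) L G)
    (hG0 : G 0 = List.ofFn fun i : Fin n => ((Fseq 0).take ((δ i : ℕ) + 1)).toFinset) :
    L = n * l ∧ ∀ (k : ℕ) (i : Fin n),
      (G (k * n + (i : ℕ))).head? = some (((Fseq k).take ((δ i : ℕ) + 1)).toFinset) :=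
  stmt14_general n faces hΔ δ l Fseq hgen L G hG hG0
end
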